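/- arXiv:1204.1408 — 7 statements merged into one kernel-verified Lean document; each statement's English description precedes it below -/
import Mathlib

section
/- Let V be an n-dimensional real inner product space with n ≥ 4, and let B, B̄ be symmetric bilinear forms on V with matrices (B_ij), (B̄_ij) in an orthonormal basis. Define S_ijkl = B_ik B_jl − B_il B_jk + (1/(n−2)) Σ_m (δ_ik B_jm B_ml + δ_jl B_im B_mk − δ_il B_jm B_mk − δ_jk B_im B_ml), and similarly S̄ for B̄. If S_ijkl = S̄_ijkl for all i,j,k,l, then either B and B̄ can be simultaneously diagonalized by an orthonormal basis, or there exists an orthonormal basis in which B̄ = diag(λ̄₁, λ̄₂, μ̄, …, μ̄) with λ̄₁ ≠ λ̄₂, and B has block form with B restricted to span(e₁,e₂) a symmetric 2×2 block (possibly non-diagonal) and B = μ·Id on span(e₃,…,e_n), where μ = ±μ̄. -/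
/-
Both `S` and the conclusion are invariant under orthogonal changes of basis
(`S = ½ B ⊙ B + (n-2)⁻¹ g ⊙ B²` in Kulkarni–Nomizu notation), so we may take `B̄ = diag λ`.
Then `S = S̄` says that the 2×2 minors of `B` on disjoint index pairs vanish, that the mixed
components `S_ijil` (`i, j, l` distinct) vanish, and that
`S_ijij = λ_i λ_j + (λ_i² + λ_j²) / (n-2)`.

If `B_ij = 0` whenever `λ_i ≠ λ_j`, then `B` commutes with `B̄` and both are diagonal in an
eigenbasis of `B + t B̄` for generic `t`. Otherwise take `B_pq ≠ 0` with `λ_p ≠ λ_q`.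
If no third coordinate couples to `p` or `q`, the identities force `B = μ` and `λ = μ̄` off
the `{p, q}` block. Otherwise they force `B = μ + ρ y yᵀ` with `ρ |y|² = -n μ`, so that
`S_ijij = S̄_ijij` becomes `(n-2) λ_i λ_j + λ_i² + λ_j² = n μ²` for all `i ≠ j`; hence `λ` is
constant except at one index, and the plane is spanned by that coordinate vector and `y`.
In both cases `S_ijij` for two indices off the plane gives `μ² = μ̄²`.
-/

open Matrix BigOperators

/-- The Weyl-tensor-like fourth order tensor `S` associated to a symmetric
bilinear form `B` (given by its coefficient matrix in an orthonormal basis):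
`S_ijkl = B_ik B_jl − B_il B_jk + (1/(n−2)) Σ_m (δ_ik B_jm B_ml + δ_jl B_im B_mk
  − δ_il B_jm B_mk − δ_jk B_im B_ml)`. -/
noncomputable def mobiusS (n : ℕ) (B : Matrix (Fin n) (Fin n) ℝ) (i j k l : Fin n) : ℝ :=
  B i k * B j l - B i l * B j k +
    (1 / ((n : ℝ) - 2)) * ∑ m : Fin n,
      ((if i = k then (1 : ℝ) else 0) * (B j m * B m l)
        + (if j = l then (1 : ℝ) else 0) * (B i m * B m k)
        - (if i = l then (1 : ℝ) else 0) * (B j m * B m k)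
        - (if j = k then (1 : ℝ) else 0) * (B i m * B m l))

open Finset

section KulkarniNomizu

variable {ι : Type*} [Fintype ι]

theorem mul_mul_transpose_apply_eq_sum (O X : Matrix ι ι ℝ) (i k : ι) :
    (O * X * Oᵀ) i k = ∑ a, ∑ c, O i a * O k c * X a c := by
  simp only [mul_apply, transpose_apply, sum_mul]
  rw [sum_comm]
  exact sum_congr rfl fun _ _ => sum_congr rfl fun _ _ => by ring

theorem sum_four_mul_eq_conj_mul_conj (O X Y : Matrix ι ι ℝ) (i j k l : ι) :
    ∑ a, ∑ b, ∑ c, ∑ d, O i a * O j b * O k c * O l d * (X a c * Y b d) =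
      (O * X * Oᵀ) i k * (O * Y * Oᵀ) j l := by
  simp only [mul_mul_transpose_apply_eq_sum, sum_mul_sum]
  exact sum_congr rfl fun _ _ => sum_congr rfl fun _ _ => sum_congr rfl fun _ _ =>
    sum_congr rfl fun _ _ => by ring

theorem sum_four_mul_eq_conj_mul_conj' (O X Y : Matrix ι ι ℝ) (i j k l : ι) :
    ∑ a, ∑ b, ∑ c, ∑ d, O i a * O j b * O k c * O l d * (X a d * Y b c) =
      (O * X * Oᵀ) i l * (O * Y * Oᵀ) j k := by
  rw [← sum_four_mul_eq_conj_mul_conj]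
  refine sum_congr rfl fun a _ => sum_congr rfl fun b _ => ?_
  rw [sum_comm]
  exact sum_congr rfl fun c _ => sum_congr rfl fun d _ => by ring

def kulkarniNomizu (h k : Matrix ι ι ℝ) (i j a b : ι) : ℝ :=
  h i a * k j b + k i a * h j b - h i b * k j a - k i b * h j a

def tensorConj (O : Matrix ι ι ℝ) (T : ι → ι → ι → ι → ℝ) (i j k l : ι) : ℝ :=
  ∑ a, ∑ b, ∑ c, ∑ d, O i a * O j b * O k c * O l d * T a b c d

theorem tensorConj_add (O : Matrix ι ι ℝ) (T T' : ι → ι → ι → ι → ℝ) :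
    tensorConj O (T + T') = tensorConj O T + tensorConj O T' := by
  ext i j k l
  simp only [tensorConj, Pi.add_apply, mul_add, sum_add_distrib]

theorem tensorConj_smul (O : Matrix ι ι ℝ) (r : ℝ) (T : ι → ι → ι → ι → ℝ) :
    tensorConj O (r • T) = r • tensorConj O T := by
  ext i j k l
  simp only [tensorConj, Pi.smul_apply, smul_eq_mul, mul_sum, mul_left_comm r]

theorem tensorConj_kulkarniNomizu (O h k : Matrix ι ι ℝ) :
    tensorConj O (kulkarniNomizu h k) = kulkarniNomizu (O * h * Oᵀ) (O * k * Oᵀ) := by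
  ext i j a b
  simp only [tensorConj, kulkarniNomizu, mul_add, mul_sub, sum_add_distrib, sum_sub_distrib]
  simp only [sum_four_mul_eq_conj_mul_conj, sum_four_mul_eq_conj_mul_conj']

end KulkarniNomizu

theorem mobiusS_eq_kulkarniNomizu (n : ℕ) (B : Matrix (Fin n) (Fin n) ℝ) :
    mobiusS n B =
      (1 / 2 : ℝ) • kulkarniNomizu B B + (1 / ((n : ℝ) - 2)) • kulkarniNomizu 1 (B * B) := by
  ext i j k l
  simp only [mobiusS, kulkarniNomizu, Pi.add_apply, Pi.smul_apply, smul_eq_mul, one_apply,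
    mul_apply, sum_add_distrib, sum_sub_distrib, ← mul_sum]
  ring

theorem mobiusS_conj {n : ℕ} (O B : Matrix (Fin n) (Fin n) ℝ) (hO : O * Oᵀ = 1) :
    mobiusS n (O * B * Oᵀ) = tensorConj O (mobiusS n B) := by
  have hO' : Oᵀ * O = 1 := mul_eq_one_comm.mp hO
  have hsq : O * (B * B) * Oᵀ = O * B * Oᵀ * (O * B * Oᵀ) := by
    simp only [Matrix.mul_assoc, ← Matrix.mul_assoc Oᵀ O, hO', Matrix.one_mul]
  rw [mobiusS_eq_kulkarniNomizu, mobiusS_eq_kulkarniNomizu, tensorConj_add, tensorConj_smul,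
    tensorConj_smul, tensorConj_kulkarniNomizu, tensorConj_kulkarniNomizu, Matrix.mul_one, hO, hsq]

theorem mobiusS_conj_eq_of_eq {n : ℕ} {B Bb : Matrix (Fin n) (Fin n) ℝ}
    (h : mobiusS n B = mobiusS n Bb) (O : Matrix (Fin n) (Fin n) ℝ) (hO : O * Oᵀ = 1) :
    mobiusS n (O * B * Oᵀ) = mobiusS n (O * Bb * Oᵀ) := by
  rw [mobiusS_conj O B hO, mobiusS_conj O Bb hO, h]

section OrthogonalMatrices

variable {ι : Type*} [Fintype ι]

theorem conj_mul_eq_conj_conj {P Q M : Matrix ι ι ℝ} :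
    P * Q * M * (P * Q)ᵀ = P * (Q * M * Qᵀ) * Pᵀ := by
  simp only [transpose_mul, Matrix.mul_assoc]

theorem Matrix.IsSymm.conj {B : Matrix ι ι ℝ} (hB : B.IsSymm) (P : Matrix ι ι ℝ) :
    (P * B * Pᵀ).IsSymm := by
  rw [IsSymm, transpose_mul, transpose_mul, transpose_transpose, hB.eq, Matrix.mul_assoc]

variable [DecidableEq ι]

theorem transpose_mul_self_mul {P Q : Matrix ι ι ℝ} (hP : Pᵀ * P = 1) (hQ : Q * Qᵀ = 1) :
    (P * Q)ᵀ * (P * Q) = 1 := by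
  rw [transpose_mul, Matrix.mul_assoc, ← Matrix.mul_assoc Pᵀ, hP, Matrix.one_mul,
    mul_eq_one_comm.mp hQ]

def SimultaneouslyOrthoDiagonalizable (B Bb : Matrix ι ι ℝ) : Prop :=
  ∃ P : Matrix ι ι ℝ, Pᵀ * P = 1 ∧ (P * B * Pᵀ).IsDiag ∧ (P * Bb * Pᵀ).IsDiag

theorem SimultaneouslyOrthoDiagonalizable.of_conj {B Bb Q : Matrix ι ι ℝ} (hQ : Q * Qᵀ = 1)
    (h : SimultaneouslyOrthoDiagonalizable (Q * B * Qᵀ) (Q * Bb * Qᵀ)) :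
    SimultaneouslyOrthoDiagonalizable B Bb := by
  obtain ⟨P, hP, hB, hBb⟩ := h
  exact ⟨P * Q, transpose_mul_self_mul hP hQ, by rwa [conj_mul_eq_conj_conj],
    by rwa [conj_mul_eq_conj_conj]⟩

theorem Matrix.IsSymm.exists_orthogonal_conj_eq_diagonal {M : Matrix ι ι ℝ} (hM : M.IsSymm) :
    ∃ (U : Matrix ι ι ℝ) (d : ι → ℝ), U * Uᵀ = 1 ∧ U * M * Uᵀ = diagonal d := by
  have hH : M.IsHermitian := by rwa [IsHermitian, conjTranspose_eq_transpose_of_trivial]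
  set V : Matrix ι ι ℝ := (hH.eigenvectorUnitary : Matrix ι ι ℝ)
  have hV : star V = Vᵀ := conjTranspose_eq_transpose_of_trivial V
  refine ⟨Vᵀ, hH.eigenvalues, ?_, ?_⟩
  · rw [transpose_transpose, ← hV]
    exact Unitary.coe_star_mul_self hH.eigenvectorUnitary
  · rw [transpose_transpose, ← hV]
    simpa using hH.conjStarAlgAut_star_eigenvectorUnitary

theorem mulVec_row_eq_smul_of_conj_eq_diagonal {M U : Matrix ι ι ℝ} (hM : M.IsSymm)
    (hU : U * Uᵀ = 1) {d : ι → ℝ} (hUM : U * M * Uᵀ = diagonal d) (k : ι) :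
    M *ᵥ U k = d k • U k := by
  have hUM' : U * M = diagonal d * U := by
    rw [← hUM, Matrix.mul_assoc _ Uᵀ, mul_eq_one_comm.mp hU, Matrix.mul_one]
  ext j
  have h := congrFun (congrFun hUM' k) j
  rw [mul_apply_eq_vecMul, diagonal_mul] at h
  conv_lhs => rw [← hM.eq, mulVec_transpose]
  rw [h, Pi.smul_apply, smul_eq_mul]

theorem exists_mul_transpose_eq_one_rows_eq (s : Set ι) (v : ι → ι → ℝ)
    (hv : ∀ i ∈ s, ∀ j ∈ s, v i ⬝ᵥ v j = if i = j then 1 else 0) :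
    ∃ P : Matrix ι ι ℝ, P * Pᵀ = 1 ∧ ∀ i ∈ s, P i = v i := by
  have hinner : ∀ x y : EuclideanSpace ℝ ι, inner ℝ x y = x.ofLp ⬝ᵥ y.ofLp := fun x y => by
    rw [EuclideanSpace.inner_eq_star_dotProduct, star_trivial, dotProduct_comm]
  have hon : Orthonormal ℝ (s.domRestrict fun i => WithLp.toLp 2 (v i)) := by
    rw [orthonormal_iff_ite]
    rintro ⟨i, hi⟩ ⟨j, hj⟩
    simp only [Set.domRestrict_apply, hinner, Subtype.mk.injEq]
    exact hv i hi j hj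
  obtain ⟨b, hb⟩ := hon.exists_orthonormalBasis_extension_of_card_eq (by simp)
  refine ⟨Matrix.of fun i => (b i).ofLp, ?_, fun i hi => by ext; simp [hb i hi]⟩
  ext i j
  rw [one_apply, ← orthonormal_iff_ite.mp b.orthonormal i j, hinner]
  rfl

theorem conj_apply_of_mulVec_eq_smul {P M : Matrix ι ι ℝ} (hP : P * Pᵀ = 1) {j : ι} {m : ℝ}
    (hj : M *ᵥ P j = m • P j) (i : ι) : (P * M * Pᵀ) i j = if i = j then m else 0 := by
  have hij : P i ⬝ᵥ P j = (1 : Matrix ι ι ℝ) i j := by rw [← hP]; rfl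
  rw [mul_mul_apply, transpose_transpose, hj, dotProduct_smul, smul_eq_mul, hij, one_apply]
  simp

theorem mulVec_eq_smul_of_apply_eq {M : Matrix ι ι ℝ} {S : Set ι} {m : ℝ}
    (hM : ∀ r k, k ∉ S → M r k = if r = k then m else 0) {x : ι → ℝ} (hx : ∀ k ∈ S, x k = 0) :
    M *ᵥ x = m • x := by
  have hterm : ∀ r k, M r k * x k = (if r = k then m else 0) * x k := by
    intro r k
    by_cases hk : k ∈ S
    · simp [hx k hk]
    · rw [hM r k hk]
  ext r
  simp [mulVec, dotProduct, hterm]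

theorem diagonal_add_vecMulVec_mul_self_apply (d y : ι → ℝ) (ρ : ℝ) (j l : ι) :
    ((diagonal d + ρ • vecMulVec y y) * (diagonal d + ρ • vecMulVec y y)) j l =
      (if j = l then d j ^ 2 else 0) + ρ * y j * y l * (d j + d l + ρ * (y ⬝ᵥ y)) := by
  simp only [Matrix.add_mul, Matrix.mul_add, Matrix.mul_smul, Matrix.smul_mul,
    vecMulVec_mul_vecMulVec, diagonal_mul_diagonal, Matrix.add_apply, Matrix.smul_apply,
    diagonal_mul, mul_diagonal, vecMulVec_apply, diagonal_apply, smul_eq_mul, Pi.smul_apply]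
  split_ifs <;> ring

theorem exists_eq_smul_single_add_smul_unit {y : ι → ℝ} {p q : ι} (hpq : p ≠ q)
    (hyq : y q ≠ 0) :
    ∃ (w : ι → ℝ) (s : ℝ), w ⬝ᵥ w = 1 ∧ w p = 0 ∧ y = y p • Pi.single p 1 + s • w := by
  set y' := Function.update y p 0
  have hpos : 0 < y' ⬝ᵥ y' :=
    sum_pos' (fun i _ => mul_self_nonneg _)
      ⟨q, mem_univ _, mul_self_pos.mpr (by simpa [y', Function.update_of_ne (Ne.symm hpq)])⟩
  have hs : 0 < √(y' ⬝ᵥ y') := Real.sqrt_pos.mpr hpos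
  refine ⟨(√(y' ⬝ᵥ y'))⁻¹ • y', √(y' ⬝ᵥ y'), ?_, by simp [y'], ?_⟩
  · simp only [smul_dotProduct, dotProduct_smul, smul_eq_mul]
    rw [← mul_assoc, ← mul_inv, Real.mul_self_sqrt hpos.le, inv_mul_cancel₀ hpos.ne']
  · ext i
    by_cases hip : i = p
    · simp [hip, y']
    · simp [y', hip, hs.ne']

theorem hasEigenvalue_toLin'_of_mulVec_eq_smul {B : Matrix ι ι ℝ} {α : ℝ} {w : ι → ℝ}
    (hw : w ≠ 0) (h : B *ᵥ w = α • w) : Module.End.HasEigenvalue (toLin' B) α :=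
  Module.End.hasEigenvalue_of_hasEigenvector
    ⟨Module.End.mem_eigenspace_iff.mpr (by simpa using h), hw⟩

theorem mulVec_levelSet_restrict {B : Matrix ι ι ℝ} {lam : ι → ℝ}
    (hB : ∀ i j, B i j ≠ 0 → lam i = lam j) {t m : ℝ} {u : ι → ℝ}
    (hu : (B + t • diagonal lam) *ᵥ u = m • u) (γ : ℝ) :
    B *ᵥ (fun j => if lam j = γ then u j else 0) =
      (m - t * γ) • fun j => if lam j = γ then u j else 0 := by
  have hBmask : ∀ i j, B i j * (if lam j = γ then u j else 0) =
      if lam i = γ then B i j * u j else 0 := by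
    intro i j
    by_cases hij : B i j = 0
    · simp [hij]
    · simp [hB i j hij]
  ext i
  have hui := congrFun hu i
  simp only [add_mulVec, smul_mulVec, mulVec_diagonal, Pi.add_apply, Pi.smul_apply,
    smul_eq_mul] at hui
  simp only [mulVec, dotProduct, hBmask, Pi.smul_apply, smul_eq_mul]
  split_ifs with hi
  · rw [← hi]
    simp only [mulVec, dotProduct] at hui
    linarith
  · simp

/-- An eigenvector of `B + t • diagonal lam` restricts to eigenvectors of `B` on the level sets
of `lam`, with eigenvalues `m - t γ`; two level sets `γ ≠ γ'` met by its support would make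
`t = (α - α') / (γ' - γ)` for eigenvalues `α, α'` of `B`, which fails for all but finitely
many `t`. -/
theorem exists_eigenvector_support_levelSet {B : Matrix ι ι ℝ} {lam : ι → ℝ}
    (hB : ∀ i j, B i j ≠ 0 → lam i = lam j) :
    ∃ t : ℝ, ∀ (u : ι → ℝ) (m : ℝ), (B + t • diagonal lam) *ᵥ u = m • u →
      ∀ j j', u j ≠ 0 → u j' ≠ 0 → lam j = lam j' := by
  set E := {α | Module.End.HasEigenvalue (toLin' B) α}
  have hE : E.Finite := Module.End.finite_hasEigenvalue _
  obtain ⟨t, ht⟩ := ((hE.prod hE).prod (Set.finite_univ (α := ι × ι))).image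
    (fun x => (x.1.1 - x.1.2) / (lam x.2.2 - lam x.2.1)) |>.exists_notMem
  refine ⟨t, fun u m hu j j' hj hj' => ?_⟩
  by_contra hne
  have hmem : ∀ i, u i ≠ 0 → m - t * lam i ∈ E := fun i hi =>
    hasEigenvalue_toLin'_of_mulVec_eq_smul (fun h => hi (by simpa using congrFun h i))
      (mulVec_levelSet_restrict hB hu (lam i))
  refine ht ⟨((m - t * lam j, m - t * lam j'), (j, j')), ⟨⟨hmem j hj, hmem j' hj'⟩, trivial⟩, ?_⟩
  field_simp [sub_ne_zero.mpr (Ne.symm hne)]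
  ring

theorem exists_conj_diagonal_eq_diagonal {U : Matrix ι ι ℝ} (hU : U * Uᵀ = 1) {lam : ι → ℝ}
    (hsupp : ∀ k j j', U k j ≠ 0 → U k j' ≠ 0 → lam j = lam j') :
    ∃ γ : ι → ℝ, U * diagonal lam * Uᵀ = diagonal γ := by
  have hγ : ∀ k, ∃ γ, ∀ j, U k j * lam j = γ * U k j := by
    intro k
    by_cases h : ∃ j, U k j ≠ 0
    · obtain ⟨j, hj⟩ := h
      refine ⟨lam j, fun j' => ?_⟩
      by_cases hj' : U k j' = 0
      · simp [hj']
      · rw [hsupp k j j' hj hj', mul_comm]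
    · push Not at h
      exact ⟨0, fun j => by simp [h j]⟩
  choose γ hγ using hγ
  have hUD : U * diagonal lam = diagonal γ * U := by
    ext k j
    simp [mul_diagonal, diagonal_mul, hγ]
  exact ⟨γ, by rw [hUD, Matrix.mul_assoc, hU, Matrix.mul_one]⟩

theorem simultaneouslyOrthoDiagonalizable_diagonal {B : Matrix ι ι ℝ} (hBs : B.IsSymm)
    {lam : ι → ℝ} (hB : ∀ i j, B i j ≠ 0 → lam i = lam j) :
    SimultaneouslyOrthoDiagonalizable B (diagonal lam) := by
  obtain ⟨t, ht⟩ := exists_eigenvector_support_levelSet hB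
  have hMs : (B + t • diagonal lam).IsSymm := hBs.add ((isSymm_diagonal lam).smul t)
  obtain ⟨U, d, hU, hUM⟩ := hMs.exists_orthogonal_conj_eq_diagonal
  obtain ⟨γ, hUD⟩ := exists_conj_diagonal_eq_diagonal hU fun k =>
    ht (U k) (d k) (mulVec_row_eq_smul_of_conj_eq_diagonal hMs hU hUM k)
  have hUB : U * B * Uᵀ = diagonal d - t • diagonal γ := by
    rw [← hUM, ← hUD]
    simp only [Matrix.mul_add, Matrix.add_mul, Matrix.mul_smul, Matrix.smul_mul]
    abel
  refine ⟨U, mul_eq_one_comm.mp hU, ?_, ?_⟩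
  · rw [hUB]
    exact (isDiag_diagonal d).sub ((isDiag_diagonal γ).smul t)
  · rw [hUD]
    exact isDiag_diagonal γ

end OrthogonalMatrices

theorem natCast_sub_two_ne_zero {n : ℕ} (hn : 3 ≤ n) : (n : ℝ) - 2 ≠ 0 := by
  have : (3 : ℝ) ≤ n := by exact_mod_cast hn
  linarith

theorem Fin.exists_ne_ne_ne {n : ℕ} (hn : 4 ≤ n) (a b c : Fin n) :
    ∃ t, t ≠ a ∧ t ≠ b ∧ t ≠ c := by
  obtain ⟨t, -, ht⟩ := exists_mem_notMem_of_card_lt_card (s := {a, b, c}) (t := univ)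
    (card_le_three.trans_lt (by simp; omega))
  simp only [mem_insert, mem_singleton, not_or] at ht
  exact ⟨t, ht⟩

section TwoBlockForm

variable {n : ℕ}

def TwoBlockForm (B Bb : Matrix (Fin n) (Fin n) ℝ) : Prop :=
  ∃ P : Matrix (Fin n) (Fin n) ℝ, Pᵀ * P = 1 ∧
    ∃ l1 l2 μ μb : ℝ, l1 ≠ l2 ∧ (μ = μb ∨ μ = -μb) ∧
    (∀ i j : Fin n, (P * Bb * Pᵀ) i j =
      if i = j then (if (i : ℕ) = 0 then l1 else if (i : ℕ) = 1 then l2 else μb) else 0) ∧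
    (∀ i j : Fin n, 2 ≤ (i : ℕ) ∨ 2 ≤ (j : ℕ) →
      (P * B * Pᵀ) i j = if i = j then μ else 0)

theorem TwoBlockForm.of_conj {B Bb Q : Matrix (Fin n) (Fin n) ℝ} (hQ : Q * Qᵀ = 1)
    (h : TwoBlockForm (Q * B * Qᵀ) (Q * Bb * Qᵀ)) : TwoBlockForm B Bb := by
  obtain ⟨P, hP, l1, l2, μ, μb, hl, hμ, hBb, hB⟩ := h
  exact ⟨P * Q, transpose_mul_self_mul hP hQ, l1, l2, μ, μb, hl, hμ,
    by simpa only [conj_mul_eq_conj_conj] using hBb, by simpa only [conj_mul_eq_conj_conj] using hB⟩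

theorem exists_mul_transpose_eq_one_rows_pair (hn : 2 ≤ n) {u w : Fin n → ℝ}
    (hu : u ⬝ᵥ u = 1) (hw : w ⬝ᵥ w = 1) (huw : u ⬝ᵥ w = 0) :
    ∃ P : Matrix (Fin n) (Fin n) ℝ, P * Pᵀ = 1 ∧ ∀ i : Fin n,
      ((i : ℕ) = 0 → P i = u) ∧ ((i : ℕ) = 1 → P i = w) ∧
      (2 ≤ (i : ℕ) → P i ⬝ᵥ u = 0 ∧ P i ⬝ᵥ w = 0) := by
  obtain ⟨P, hP, hPv⟩ := exists_mul_transpose_eq_one_rows_eq {i : Fin n | (i : ℕ) ≤ 1}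
    (fun i => if (i : ℕ) = 0 then u else w) (by
      intro i hi j hj
      simp only [Set.mem_ofPred_eq] at hi hj
      rcases Nat.le_one_iff_eq_zero_or_eq_one.mp hi with hi | hi <;>
      rcases Nat.le_one_iff_eq_zero_or_eq_one.mp hj with hj | hj <;>
      simp [hi, hj, Fin.ext_iff, hu, hw, huw, dotProduct_comm w u])
  have hrow : ∀ i : Fin n, (i : ℕ) = 0 → P i = u := fun i hi => by
    simpa [hi] using hPv i (by simp [hi])
  have hrow' : ∀ i : Fin n, (i : ℕ) = 1 → P i = w := fun i hi => by
    simpa [hi] using hPv i (by simp [hi])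
  have horth : ∀ i j : Fin n, i ≠ j → P i ⬝ᵥ P j = 0 := fun i j hij => by
    have : (P * Pᵀ) i j = 0 := by rw [hP, one_apply_ne hij]
    exact this
  refine ⟨P, hP, fun i => ⟨hrow i, hrow' i, fun hi => ?_⟩⟩
  rw [← hrow ⟨0, by omega⟩ rfl, ← hrow' ⟨1, by omega⟩ rfl]
  exact ⟨horth _ _ fun h => by simp [h] at hi, horth _ _ fun h => by simp [h] at hi⟩

theorem twoBlockForm_of_rows {B Bb P : Matrix (Fin n) (Fin n) ℝ} (hB : B.IsSymm)
    (hP : P * Pᵀ = 1) {l1 l2 μ μb : ℝ} (hl : l1 ≠ l2) (hμ : μ = μb ∨ μ = -μb)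
    (hBb : ∀ i : Fin n,
      Bb *ᵥ P i = (if (i : ℕ) = 0 then l1 else if (i : ℕ) = 1 then l2 else μb) • P i)
    (hBμ : ∀ i : Fin n, 2 ≤ (i : ℕ) → B *ᵥ P i = μ • P i) :
    TwoBlockForm B Bb := by
  refine ⟨P, mul_eq_one_comm.mp hP, l1, l2, μ, μb, hl, hμ, fun i j => ?_, fun i j hij => ?_⟩
  · rw [conj_apply_of_mulVec_eq_smul hP (hBb j)]
    split_ifs <;> simp_all
  · rcases hij with hi | hj
    · rw [← (hB.conj P).eq, transpose_apply, conj_apply_of_mulVec_eq_smul hP (hBμ i hi)]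
      exact if_congr eq_comm rfl rfl
    · exact conj_apply_of_mulVec_eq_smul hP (hBμ j hj) i

end TwoBlockForm

theorem exists_eq_off_of_pair_relation {n : ℕ} (hn : 4 ≤ n) {lam : Fin n → ℝ} {K : ℝ}
    (h : ∀ i j, i ≠ j → ((n : ℝ) - 2) * (lam i * lam j) + lam i ^ 2 + lam j ^ 2 = K)
    {p q : Fin n} (hpq : lam p ≠ lam q) :
    ∃ μb : ℝ, n * μb ^ 2 = K ∧ ((∀ i, i ≠ p → lam i = μb) ∨ (∀ i, i ≠ q → lam i = μb)) := by
  have hN : (n : ℝ) - 2 ≠ 0 := natCast_sub_two_ne_zero (by omega)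
  set μb := -(lam p + lam q) / ((n : ℝ) - 2)
  have hoff : ∀ i, i ≠ p → i ≠ q → lam i = μb := by
    intro i hip hiq
    have h1 : (lam p - lam q) * (((n : ℝ) - 2) * lam i + lam p + lam q) = 0 := by
      linear_combination h p i (Ne.symm hip) - h q i (Ne.symm hiq)
    rw [eq_div_iff hN]
    linear_combination (mul_eq_zero.mp h1).resolve_left (sub_ne_zero.mpr hpq)
  obtain ⟨i₀, hi₀p, hi₀q, -⟩ := Fin.exists_ne_ne_ne hn p q p
  obtain ⟨j₀, hj₀p, hj₀q, hj₀i₀⟩ := Fin.exists_ne_ne_ne hn p q i₀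
  have hK : n * μb ^ 2 = K := by
    have h0 := h i₀ j₀ (Ne.symm hj₀i₀)
    rw [hoff i₀ hi₀p hi₀q, hoff j₀ hj₀p hj₀q] at h0
    linear_combination h0
  have hroot : ∀ a, a ≠ i₀ → lam a = μb ∨ lam a = -(((n : ℝ) - 1) * μb) := by
    intro a ha
    have h0 := h a i₀ ha
    rw [hoff i₀ hi₀p hi₀q] at h0
    have h1 : (lam a - μb) * (lam a + ((n : ℝ) - 1) * μb) = 0 := by
      linear_combination h0 - hK
    rcases mul_eq_zero.mp h1 with h2 | h2
    · exact .inl (sub_eq_zero.mp h2)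
    · exact .inr (by linear_combination h2)
  refine ⟨μb, hK, ?_⟩
  rcases hroot p (Ne.symm hi₀p) with hp | hp
  · refine .inr fun i hiq => ?_
    by_cases hip : i = p
    · rw [hip, hp]
    · exact hoff i hip hiq
  rcases hroot q (Ne.symm hi₀q) with hq | hq
  · refine .inl fun i hip => ?_
    by_cases hiq : i = q
    · rw [hiq, hq]
    · exact hoff i hip hiq
  exact absurd (hp.trans hq.symm) hpq

section Components

variable {n : ℕ} {B : Matrix (Fin n) (Fin n) ℝ} {lam : Fin n → ℝ}

theorem mul_eq_mul_of_mobiusS_eq_diagonal (hS : mobiusS n B = mobiusS n (diagonal lam))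
    {i j k l : Fin n} (hik : i ≠ k) (hil : i ≠ l) (hjk : j ≠ k) (hjl : j ≠ l) :
    B i k * B j l = B i l * B j k := by
  have h := congrFun (congrFun (congrFun (congrFun hS i) j) k) l
  simp only [mobiusS, one_div, hik, ↓reduceIte, zero_mul, hjl, add_zero, hil, sub_self, hjk,
    sum_const_zero, mul_zero, ne_eq, not_false_eq_true, diagonal_apply_ne] at h
  linarith

theorem mixed_relation_of_mobiusS_eq_diagonal (hn : 3 ≤ n)
    (hS : mobiusS n B = mobiusS n (diagonal lam)) {i j l : Fin n} (hij : i ≠ j) (hil : i ≠ l)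
    (hjl : j ≠ l) :
    ((n : ℝ) - 2) * (B i i * B j l - B i l * B j i) + (B * B) j l = 0 := by
  have hN : (n : ℝ) - 2 ≠ 0 := natCast_sub_two_ne_zero (by omega)
  have h := congrFun (congrFun (congrFun (congrFun hS i) j) i) l
  simp only [mobiusS, one_div, ↓reduceIte, one_mul, hjl, zero_mul, add_zero, hil, sub_zero,
    Ne.symm hij, ne_eq, not_false_eq_true, diagonal_apply_ne, mul_zero, sub_self, diagonal_apply,
    mul_ite, ite_mul, ite_self, sum_ite_eq', mem_univ] at h
  field_simp at h
  rw [mul_apply]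
  linear_combination h

theorem pair_relation_of_mobiusS_eq_diagonal (hn : 3 ≤ n)
    (hS : mobiusS n B = mobiusS n (diagonal lam)) {i j : Fin n} (hij : i ≠ j) :
    ((n : ℝ) - 2) * (B i i * B j j - B i j * B j i) + (B * B) i i + (B * B) j j =
      ((n : ℝ) - 2) * (lam i * lam j) + lam i ^ 2 + lam j ^ 2 := by
  have hN : (n : ℝ) - 2 ≠ 0 := natCast_sub_two_ne_zero (by omega)
  have h := congrFun (congrFun (congrFun (congrFun hS i) j) i) j
  simp only [mobiusS, one_div, ↓reduceIte, one_mul, hij, zero_mul, sub_zero, Ne.symm hij,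
    sum_add_distrib, ne_eq, not_false_eq_true, diagonal_apply_ne, mul_zero, diagonal_apply,
    mul_ite, ite_mul, ite_self, sum_ite_eq', mem_univ] at h
  field_simp at h
  rw [mul_apply, mul_apply]
  linear_combination h

theorem exists_col_eq_of_isolated_pair (hn : 4 ≤ n) (hB : B.IsSymm)
    (hS : mobiusS n B = mobiusS n (diagonal lam)) {p q : Fin n} (hpq : p ≠ q) (hBpq : B p q ≠ 0)
    (hiso : ∀ r, r ≠ p → r ≠ q → B p r = 0 ∧ B q r = 0) :
    ∃ μ, ∀ r k, k ∉ ({p, q} : Set (Fin n)) → B r k = if r = k then μ else 0 := by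
  have hN : (n : ℝ) - 2 ≠ 0 := natCast_sub_two_ne_zero (by omega)
  have hoff : ∀ r s, r ≠ p → r ≠ q → s ≠ p → s ≠ q → r ≠ s → B r s = 0 := by
    intro r s hrp hrq hsp hsq hrs
    have h := mul_eq_mul_of_mobiusS_eq_diagonal hS hpq (Ne.symm hsp) hrq hrs
    rw [hB.apply q r, (hiso r hrp hrq).2, mul_zero] at h
    exact (mul_eq_zero.mp h).resolve_left hBpq
  have hmixed : ∀ r, r ≠ p → r ≠ q → ((n : ℝ) - 2) * (B r r * B p q) + (B * B) p q = 0 := by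
    intro r hrp hrq
    have h := mixed_relation_of_mobiusS_eq_diagonal (by omega) hS hrp hrq hpq
    rw [hB.apply q r, (hiso r hrp hrq).2] at h
    linear_combination h
  obtain ⟨r₀, hr₀p, hr₀q, -⟩ := Fin.exists_ne_ne_ne hn p q p
  have hdiag : ∀ r, r ≠ p → r ≠ q → B r r = B r₀ r₀ := by
    intro r hrp hrq
    have h : ((n : ℝ) - 2) * B p q * (B r r - B r₀ r₀) = 0 := by
      linear_combination hmixed r hrp hrq - hmixed r₀ hr₀p hr₀q
    exact sub_eq_zero.mp ((mul_eq_zero.mp h).resolve_left (mul_ne_zero hN hBpq))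
  refine ⟨B r₀ r₀, fun r k hk => ?_⟩
  simp only [Set.mem_insert_iff, Set.mem_singleton_iff, not_or] at hk
  split_ifs with hrk
  · exact hrk ▸ hdiag k hk.1 hk.2
  by_cases hrp : r = p
  · exact hrp ▸ (hiso k hk.1 hk.2).1
  by_cases hrq : r = q
  · exact hrq ▸ (hiso k hk.1 hk.2).2
  exact hoff r k hrp hrq hk.1 hk.2 hrk

theorem exists_lam_eq_of_col_eq (hn : 4 ≤ n) (hB : B.IsSymm)
    (hS : mobiusS n B = mobiusS n (diagonal lam)) {p q : Fin n} (hlam : lam p ≠ lam q) {μ : ℝ}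
    (hcol : ∀ r k, k ∉ ({p, q} : Set (Fin n)) → B r k = if r = k then μ else 0) :
    ∃ μb, (∀ r, r ∉ ({p, q} : Set (Fin n)) → lam r = μb) ∧ (μ = μb ∨ μ = -μb) := by
  have hN : (n : ℝ) - 2 ≠ 0 := natCast_sub_two_ne_zero (by omega)
  have hsq : ∀ r, r ∉ ({p, q} : Set (Fin n)) → (B * B) r r = μ ^ 2 := by
    intro r hr
    simp [mul_apply, hcol _ r hr, sq]
  have hpair : ∀ a ∈ ({p, q} : Set (Fin n)), ∀ r ∉ ({p, q} : Set (Fin n)),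
      ((n : ℝ) - 2) * (lam r * lam a) + lam r ^ 2 + lam a ^ 2 =
        ((n : ℝ) - 2) * (μ * B a a) + μ ^ 2 + (B * B) a a := by
    intro a ha r hr
    have har : r ≠ a := fun h => hr (h ▸ ha)
    have h := pair_relation_of_mobiusS_eq_diagonal (by omega) hS har
    rw [hB.apply a r, hcol a r hr, hcol r r hr, if_neg (Ne.symm har), if_pos rfl,
      hsq r hr] at h
    linear_combination -h
  obtain ⟨r₀, hr₀p, hr₀q, -⟩ := Fin.exists_ne_ne_ne hn p q p
  obtain ⟨r₁, hr₁p, hr₁q, hr₁₀⟩ := Fin.exists_ne_ne_ne hn p q r₀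
  have hr₀ : r₀ ∉ ({p, q} : Set (Fin n)) := by simp [hr₀p, hr₀q]
  have hr₁ : r₁ ∉ ({p, q} : Set (Fin n)) := by simp [hr₁p, hr₁q]
  have hlamc : ∀ r, r ∉ ({p, q} : Set (Fin n)) → lam r = lam r₀ := by
    intro r hr
    by_contra hne
    have hdiff : ∀ a ∈ ({p, q} : Set (Fin n)), ((n : ℝ) - 2) * lam a = -(lam r + lam r₀) := by
      intro a ha
      have h : (lam r - lam r₀) * (((n : ℝ) - 2) * lam a + (lam r + lam r₀)) = 0 := by
        linear_combination hpair a ha r hr - hpair a ha r₀ hr₀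
      linear_combination (mul_eq_zero.mp h).resolve_left (sub_ne_zero.mpr hne)
    exact hlam (mul_left_cancel₀ hN ((hdiff p (by simp)).trans (hdiff q (by simp)).symm))
  refine ⟨lam r₀, hlamc, ?_⟩
  have h := pair_relation_of_mobiusS_eq_diagonal (by omega) hS (Ne.symm hr₁₀)
  rw [hcol r₀ r₁ hr₁, hcol r₁ r₀ hr₀, hcol r₀ r₀ hr₀, hcol r₁ r₁ hr₁, if_neg (Ne.symm hr₁₀),
    if_neg hr₁₀, if_pos rfl, if_pos rfl, hsq r₀ hr₀, hsq r₁ hr₁, hlamc r₁ hr₁] at h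
  have hn0 : (n : ℝ) ≠ 0 := by positivity
  exact sq_eq_sq_iff_eq_or_eq_neg.mp (mul_left_cancel₀ hn0 (by linear_combination h))

theorem twoBlockForm_of_isolated_pair (hn : 4 ≤ n) (hB : B.IsSymm)
    (hS : mobiusS n B = mobiusS n (diagonal lam)) {p q : Fin n} (hpq : p ≠ q) (hBpq : B p q ≠ 0)
    (hlam : lam p ≠ lam q) (hiso : ∀ r, r ≠ p → r ≠ q → B p r = 0 ∧ B q r = 0) :
    TwoBlockForm B (diagonal lam) := by
  obtain ⟨μ, hcol⟩ := exists_col_eq_of_isolated_pair hn hB hS hpq hBpq hiso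
  obtain ⟨μb, hlamc, hμ⟩ := exists_lam_eq_of_col_eq hn hB hS hlam hcol
  obtain ⟨P, hP, hrows⟩ := exists_mul_transpose_eq_one_rows_pair (by omega : 2 ≤ n)
    (u := Pi.single p 1) (w := Pi.single q 1) (by simp) (by simp) (by simp [hpq])
  have hblock : ∀ i : Fin n, 2 ≤ (i : ℕ) → ∀ k ∈ ({p, q} : Set (Fin n)), P i k = 0 := by
    intro i hi k hk
    obtain ⟨h0, h1⟩ := (hrows i).2.2 hi
    rw [dotProduct_single, mul_one] at h0 h1
    rcases hk with rfl | rfl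
    · exact h0
    · exact h1
  refine twoBlockForm_of_rows hB hP hlam hμ (fun i => ?_) fun i hi =>
    mulVec_eq_smul_of_apply_eq hcol (hblock i hi)
  by_cases hi0 : (i : ℕ) = 0
  · ext k
    simp [(hrows i).1 hi0, hi0, Pi.single_apply]
  by_cases hi1 : (i : ℕ) = 1
  · ext k
    simp [(hrows i).2.1 hi1, hi1, Pi.single_apply]
  rw [if_neg hi0, if_neg hi1]
  refine mulVec_eq_smul_of_apply_eq (fun r k hk => ?_) (hblock i (by omega))
  rw [diagonal_apply]
  split_ifs with hrk
  · rw [hrk, hlamc k hk]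
  · rfl

theorem ne_zero_of_mobiusS_eq_diagonal (hn : 4 ≤ n) (hB : B.IsSymm)
    (hS : mobiusS n B = mobiusS n (diagonal lam)) {p q r : Fin n} (hpq : p ≠ q) (hpr : p ≠ r)
    (hqr : q ≠ r) (hBpq : B p q ≠ 0) (hBpr : B p r ≠ 0) : B q r ≠ 0 := by
  intro hBqr
  have hrow : ∀ m, m ≠ p → m ≠ q → B q m = 0 := by
    intro m hmp hmq
    have h := mul_eq_mul_of_mobiusS_eq_diagonal hS (Ne.symm hmp) hpr (Ne.symm hmq) hqr
    rw [hBqr, mul_zero] at h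
    exact (mul_eq_zero.mp h.symm).resolve_left hBpr
  have hsq : (B * B) q r = B p q * B p r := by
    rw [mul_apply, Fintype.sum_eq_add p q hpq fun m hm => by rw [hrow m hm.1 hm.2, zero_mul],
      hBqr, mul_zero, add_zero, hB.apply p q]
  have h := mixed_relation_of_mobiusS_eq_diagonal (by omega) hS hpq hpr hqr
  rw [hBqr, hsq, hB.apply p q] at h
  have hn3 : (n : ℝ) - 3 ≠ 0 := by
    have : (4 : ℝ) ≤ n := by exact_mod_cast hn
    linarith
  exact mul_ne_zero hn3 (mul_ne_zero hBpq hBpr) (by linear_combination -h)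

theorem exists_offDiag_eq_rankOne (hB : B.IsSymm) (hS : mobiusS n B = mobiusS n (diagonal lam))
    {p q r : Fin n} (hpq : p ≠ q) (hpr : p ≠ r) (hqr : q ≠ r) (hBpq : B p q ≠ 0)
    (hBpr : B p r ≠ 0) (hBqr : B q r ≠ 0) :
    ∃ (ρ : ℝ) (y : Fin n → ℝ), ρ ≠ 0 ∧ y p ≠ 0 ∧ y q ≠ 0 ∧ y r ≠ 0 ∧
      ∀ i j, i ≠ j → B i j = ρ * y i * y j := by
  have hq : ∀ m, m ≠ p → m ≠ q → B q m * B p r = B q r * B p m := by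
    intro m hmp hmq
    linear_combination -(mul_eq_mul_of_mobiusS_eq_diagonal hS (Ne.symm hmp) hpr (Ne.symm hmq) hqr)
  have hgen : ∀ i j, i ≠ p → j ≠ p → i ≠ j → B i j * (B p q * B p r) = B q r * B p i * B p j := by
    intro i j hip hjp hij
    by_cases hiq : i = q
    · rw [hiq]
      linear_combination B p q * hq j hjp (hiq ▸ Ne.symm hij)
    by_cases hjq : j = q
    · rw [hjq, ← hB.apply i q]
      linear_combination B p q * hq i hip hiq
    have h := mul_eq_mul_of_mobiusS_eq_diagonal hS hpq (Ne.symm hjp) hiq hij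
    rw [hB.apply q i] at h
    linear_combination B p r * h + B p j * hq i hip hiq
  set ρ := B q r / (B p q * B p r)
  have hρ : ρ ≠ 0 := div_ne_zero hBqr (mul_ne_zero hBpq hBpr)
  refine ⟨ρ, fun m => if m = p then ρ⁻¹ else B p m, hρ, by simpa using hρ, by simpa [Ne.symm hpq],
    by simpa [Ne.symm hpr], fun i j hij => ?_⟩
  by_cases hip : i = p
  · rw [hip] at hij ⊢
    simp [Ne.symm hij, hρ]
  by_cases hjp : j = p
  · rw [hjp, ← hB.apply]
    simp only [hip, if_true, if_false]
    field_simp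
  simp only [hip, hjp, if_false, ρ]
  field_simp
  linear_combination hgen i j hip hjp hij

theorem exists_eq_diagonal_const_add_rankOne (hn : 4 ≤ n)
    (hS : mobiusS n B = mobiusS n (diagonal lam)) {ρ : ℝ} {y : Fin n → ℝ} (hρ : ρ ≠ 0)
    {p q r : Fin n} (hpq : p ≠ q) (hpr : p ≠ r) (hqr : q ≠ r) (hyp : y p ≠ 0) (hyq : y q ≠ 0)
    (hyr : y r ≠ 0) (hoff : ∀ i j, i ≠ j → B i j = ρ * y i * y j) :
    ∃ μ, B = diagonal (fun _ => μ) + ρ • vecMulVec y y ∧ ρ * (y ⬝ᵥ y) = -(n * μ) := by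
  have hN : (n : ℝ) - 2 ≠ 0 := natCast_sub_two_ne_zero (by omega)
  set d : Fin n → ℝ := fun i => B i i - ρ * y i ^ 2
  have hBd : B = diagonal d + ρ • vecMulVec y y := by
    ext i j
    by_cases hij : i = j
    · subst hij
      simp [d, vecMulVec_apply, sq]
    · simp [hoff i j hij, hij, vecMulVec_apply, mul_assoc]
  have hrel : ∀ i j l, i ≠ j → i ≠ l → j ≠ l → y j ≠ 0 → y l ≠ 0 →
      ((n : ℝ) - 2) * d i + d j + d l + ρ * (y ⬝ᵥ y) = 0 := by
    intro i j l hij hil hjl hyj hyl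
    have h := mixed_relation_of_mobiusS_eq_diagonal (by omega) hS hij hil hjl
    have hsq := diagonal_add_vecMulVec_mul_self_apply d y ρ j l
    rw [← hBd, if_neg hjl, zero_add] at hsq
    rw [hsq, hoff j l hjl, hoff i l hil, hoff j i (Ne.symm hij)] at h
    have h' : ρ * y j * y l * (((n : ℝ) - 2) * d i + d j + d l + ρ * (y ⬝ᵥ y)) = 0 := by
      linear_combination h
    exact (mul_eq_zero.mp h').resolve_left (mul_ne_zero (mul_ne_zero hρ hyj) hyl)
  obtain ⟨t, htp, htq, htr⟩ := Fin.exists_ne_ne_ne hn p q r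
  have hsame : ∀ i j l, i ≠ j → i ≠ l → j ≠ l → y j ≠ 0 → y l ≠ 0 → t ≠ j → t ≠ l →
      d i = d t := by
    intro i j l hij hil hjl hyj hyl htj htl
    have h := sub_eq_zero.mpr ((hrel i j l hij hil hjl hyj hyl).trans
      (hrel t j l htj htl hjl hyj hyl).symm)
    exact sub_eq_zero.mp ((mul_eq_zero.mp (by linear_combination h)).resolve_left hN)
  have hd : ∀ i, d i = d t := by
    intro i
    by_cases hip : i = p
    · subst hip; exact hsame i q r hpq hpr hqr hyq hyr htq htr
    by_cases hiq : i = q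
    · subst hiq; exact hsame i p r (Ne.symm hpq) hqr hpr hyp hyr htp htr
    exact hsame i p q hip hiq hpq hyp hyq htp htq
  refine ⟨d t, by rw [hBd]; congr 2; exact funext hd, ?_⟩
  linear_combination hrel t p q htp htq hpq hyp hyq + ((n : ℝ) - 2) * hd t - hd p - hd q

theorem pair_relation_of_rankOne (hn : 3 ≤ n) (hS : mobiusS n B = mobiusS n (diagonal lam))
    {μ ρ : ℝ} {y : Fin n → ℝ} (hBμ : B = diagonal (fun _ => μ) + ρ • vecMulVec y y)
    (hT : ρ * (y ⬝ᵥ y) = -(n * μ)) {i j : Fin n} (hij : i ≠ j) :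
    ((n : ℝ) - 2) * (lam i * lam j) + lam i ^ 2 + lam j ^ 2 = n * μ ^ 2 := by
  have h := pair_relation_of_mobiusS_eq_diagonal hn hS hij
  have hsq : ∀ k, (B * B) k k = μ ^ 2 + ρ * y k * y k * (2 * μ + ρ * (y ⬝ᵥ y)) := fun k => by
    rw [hBμ, diagonal_add_vecMulVec_mul_self_apply, if_pos rfl]
    ring
  have hentry : ∀ k l, B k l = (if k = l then μ else 0) + ρ * (y k * y l) := fun k l => by
    simp [hBμ, diagonal_apply, vecMulVec_apply]
  rw [hsq, hsq, hentry i i, hentry j j, hentry i j, hentry j i, if_pos rfl, if_pos rfl,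
    if_neg hij, if_neg (Ne.symm hij)] at h
  linear_combination -h + ρ * (y i ^ 2 + y j ^ 2) * hT

theorem twoBlockForm_of_rankOne (hn : 2 ≤ n) {μ μb ρ : ℝ} {y : Fin n → ℝ} {p q : Fin n}
    (hpq : p ≠ q) (hyq : y q ≠ 0)
    (hBμ : B = diagonal (fun _ => μ) + ρ • vecMulVec y y) (hlam : ∀ i, i ≠ p → lam i = μb)
    (hlp : lam p ≠ μb) (hμ : μ = μb ∨ μ = -μb) :
    TwoBlockForm B (diagonal lam) := by
  obtain ⟨w, s, hw, hwp, hy⟩ := exists_eq_smul_single_add_smul_unit hpq hyq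
  obtain ⟨P, hP, hrows⟩ := exists_mul_transpose_eq_one_rows_pair hn (u := Pi.single p 1) (w := w)
    (by simp) hw (by simp [hwp])
  have hB : B.IsSymm := by
    rw [hBμ]
    exact (isSymm_diagonal _).add (IsSymm.smul (transpose_vecMulVec y y) ρ)
  have hcol : ∀ r k, k ∉ ({p} : Set (Fin n)) → diagonal lam r k = if r = k then μb else 0 := by
    intro r k hk
    rw [diagonal_apply]
    split_ifs with hrk
    · rw [hrk, hlam k hk]
    · rfl
  have hzero : ∀ i : Fin n, (i : ℕ) ≠ 0 → ∀ k ∈ ({p} : Set (Fin n)), P i k = 0 := by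
    intro i hi0 k hk
    rw [Set.mem_singleton_iff.mp hk]
    by_cases hi1 : (i : ℕ) = 1
    · rw [(hrows i).2.1 hi1, hwp]
    · simpa using ((hrows i).2.2 (by omega)).1
  refine twoBlockForm_of_rows hB hP hlp hμ (fun i => ?_) fun i hi => ?_
  · by_cases hi0 : (i : ℕ) = 0
    · ext k
      simp [(hrows i).1 hi0, hi0, Pi.single_apply]
    rw [if_neg hi0, ite_self]
    exact mulVec_eq_smul_of_apply_eq hcol (hzero i hi0)
  · have hyx : y ⬝ᵥ P i = 0 := by
      obtain ⟨h0, h1⟩ := (hrows i).2.2 hi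
      rw [hy, add_dotProduct, smul_dotProduct, smul_dotProduct, dotProduct_comm, h0,
        dotProduct_comm, h1, smul_zero, smul_zero, add_zero]
    ext k
    simp [hBμ, add_mulVec, smul_mulVec, vecMulVec_mulVec, hyx]

theorem twoBlockForm_of_triangle (hn : 4 ≤ n) (hB : B.IsSymm)
    (hS : mobiusS n B = mobiusS n (diagonal lam)) {p q r : Fin n} (hpq : p ≠ q) (hpr : p ≠ r)
    (hqr : q ≠ r) (hBpq : B p q ≠ 0) (hBpr : B p r ≠ 0) (hlam : lam p ≠ lam q) :
    TwoBlockForm B (diagonal lam) := by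
  have hBqr := ne_zero_of_mobiusS_eq_diagonal hn hB hS hpq hpr hqr hBpq hBpr
  obtain ⟨ρ, y, hρ, hyp, hyq, hyr, hoff⟩ :=
    exists_offDiag_eq_rankOne hB hS hpq hpr hqr hBpq hBpr hBqr
  obtain ⟨μ, hBμ, hT⟩ :=
    exists_eq_diagonal_const_add_rankOne hn hS hρ hpq hpr hqr hyp hyq hyr hoff
  obtain ⟨μb, hμb, hspecial⟩ := exists_eq_off_of_pair_relation hn
    (fun i j hij => pair_relation_of_rankOne (by omega) hS hBμ hT hij) hlam
  have hn0 : (n : ℝ) ≠ 0 := by positivity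
  have hμ : μ = μb ∨ μ = -μb :=
    sq_eq_sq_iff_eq_or_eq_neg.mp (mul_left_cancel₀ hn0 hμb).symm
  rcases hspecial with h | h
  · exact twoBlockForm_of_rankOne (by omega) hpq hyq hBμ h (h q (Ne.symm hpq) ▸ hlam) hμ
  · exact twoBlockForm_of_rankOne (by omega) (Ne.symm hpq) hyp hBμ h
      (h p hpq ▸ Ne.symm hlam) hμ

theorem simultaneouslyOrthoDiagonalizable_or_twoBlockForm (hn : 4 ≤ n) (hB : B.IsSymm)
    (hS : mobiusS n B = mobiusS n (diagonal lam)) :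
    SimultaneouslyOrthoDiagonalizable B (diagonal lam) ∨ TwoBlockForm B (diagonal lam) := by
  by_cases hmix : ∀ i j, B i j ≠ 0 → lam i = lam j
  · exact .inl (simultaneouslyOrthoDiagonalizable_diagonal hB hmix)
  push Not at hmix
  obtain ⟨p, q, hBpq, hlam⟩ := hmix
  have hpq : p ≠ q := fun h => hlam (h ▸ rfl)
  right
  by_cases hiso : ∀ r, r ≠ p → r ≠ q → B p r = 0 ∧ B q r = 0
  · exact twoBlockForm_of_isolated_pair hn hB hS hpq hBpq hlam hiso
  push Not at hiso
  obtain ⟨r, hrp, hrq, hr⟩ := hiso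
  by_cases hBpr : B p r = 0
  · exact twoBlockForm_of_triangle hn hB hS (Ne.symm hpq) (Ne.symm hrq) (Ne.symm hrp)
      (by rwa [hB.apply]) (hr hBpr) (Ne.symm hlam)
  · exact twoBlockForm_of_triangle hn hB hS hpq (Ne.symm hrp) (Ne.symm hrq) hBpq hBpr hlam

end Components

/-- Theorem 6.1: if two symmetric bilinear forms `B`, `B̄` on an `n`-dimensional
(`n ≥ 4`) inner product space have equal associated tensors `S = S̄`, then either
they are simultaneously diagonalizable by an orthonormal basis, or in a suitable
orthonormal basis `B̄ = diag(λ̄₁, λ̄₂, μ̄, …, μ̄)` with `λ̄₁ ≠ λ̄₂`, while `B` is a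
symmetric 2×2 block on the first two vectors and `μ·Id` elsewhere, `μ = ±μ̄`.
(A change of orthonormal basis is encoded by conjugation with `P`, `PᵀP = 1`.) -/
theorem stmt0 (n : ℕ) (hn : 4 ≤ n) (B Bb : Matrix (Fin n) (Fin n) ℝ)
    (hB : B.IsSymm) (hBb : Bb.IsSymm)
    (hS : ∀ i j k l, mobiusS n B i j k l = mobiusS n Bb i j k l) :
    (∃ P : Matrix (Fin n) (Fin n) ℝ, Pᵀ * P = 1 ∧
      (P * B * Pᵀ).IsDiag ∧ (P * Bb * Pᵀ).IsDiag) ∨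
    (∃ P : Matrix (Fin n) (Fin n) ℝ, Pᵀ * P = 1 ∧
      ∃ l1 l2 μ μb : ℝ, l1 ≠ l2 ∧ (μ = μb ∨ μ = -μb) ∧
      (∀ i j : Fin n, (P * Bb * Pᵀ) i j =
        if i = j then (if (i : ℕ) = 0 then l1 else if (i : ℕ) = 1 then l2 else μb) else 0) ∧
      (∀ i j : Fin n, 2 ≤ (i : ℕ) ∨ 2 ≤ (j : ℕ) →
        (P * B * Pᵀ) i j = if i = j then μ else 0)) := by
  obtain ⟨Q, d, hQ, hQBb⟩ := hBb.exists_orthogonal_conj_eq_diagonal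
  have hS' : mobiusS n (Q * B * Qᵀ) = mobiusS n (diagonal d) := by
    rw [← hQBb]
    exact mobiusS_conj_eq_of_eq (funext fun i => funext fun j => funext fun k => funext (hS i j k))
      Q hQ
  rcases simultaneouslyOrthoDiagonalizable_or_twoBlockForm hn (hB.conj Q) hS' with h | h
  · exact .inl (SimultaneouslyOrthoDiagonalizable.of_conj hQ (hQBb ▸ h))
  · exact .inr (TwoBlockForm.of_conj hQ (hQBb ▸ h))
end

section
/- Let n ≥ 4 and let B be a symmetric n×n real matrix with B_ij = 0 for all pairs (i,j) with i ≠ j except possibly (1,2) and (2,1), and with B_12 ≠ 0. Suppose B satisfies, for all distinct i, j, k: B_ii B_jk − B_ij B_ik + (1/(n−2)) Σ_m B_jm B_km = 0. Then B_αα = −(B_11 + B_22)/(n−2) for every α ≥ 3, and consequently the trace of B is zero. -/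
open Matrix BigOperators

/-!
Take `α ≥ 2`, so that `B_α0 = B_α1 = 0`. The identity for the triple `(α, 0, 1)` then reads
`B_αα B_01 + (1/(n-2)) (B_00 + B_11) B_01 = 0`, since row `0` of `B` is supported on
`{0, 1}`. Cancelling `B_01 ≠ 0` gives the diagonal entries, and summing them gives the trace.
-/

variable {R : Type*} [CommRing R]

lemma Matrix.apply_self_eq_neg_mul_of_mixed_identity [IsDomain R] {ι : Type*} [Fintype ι]
    {B : Matrix ι ι R} (hsym : B.IsSymm) {a b α : ι} (hab : a ≠ b)
    (hrow : ∀ m, m ≠ a ∧ m ≠ b → B a m = 0) (hαa : B α a = 0) (hαb : B α b = 0)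
    (hB : B a b ≠ 0) (c : R)
    (h : B α α * B a b - B α a * B α b + c * ∑ m, B a m * B b m = 0) :
    B α α = -c * (B a a + B b b) := by
  have hba : B b a = B a b := hsym.apply a b
  have hsum : ∑ m, B a m * B b m = B a b * (B a a + B b b) := by
    rw [Fintype.sum_eq_add a b hab fun m hm => by rw [hrow m hm, zero_mul], hba]
    ring
  rw [hsum, hαa, hαb] at h
  refine mul_right_cancel₀ hB ?_
  linear_combination h

lemma Matrix.trace_eq_add_of_diag_eq {n : ℕ} (B : Matrix (Fin (n + 2)) (Fin (n + 2)) R) (d : R)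
    (h : ∀ α : Fin n, B α.succ.succ α.succ.succ = d) :
    trace B = B 0 0 + B 1 1 + n * d := by
  simp [trace, Fin.sum_univ_succ, h, add_assoc]

/-- If `B` is a symmetric `n×n` matrix (`n ≥ 4`) whose only possibly nonzero
off-diagonal entries are `B₀₁ = B₁₀ ≠ 0`, and `B` satisfies
`B_ii B_jk − B_ij B_ik + (1/(n−2)) Σ_m B_jm B_km = 0` for all distinct
`i, j, k`, then `B_αα = −(B₀₀ + B₁₁)/(n−2)` for every index `α ≥ 2`, and
consequently `trace B = 0`. -/
theorem stmt3 (n : ℕ) (hn : 4 ≤ n) (B : Matrix (Fin n) (Fin n) ℝ)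
    (hsym : B.IsSymm)
    (hoff : ∀ i j : Fin n, i ≠ j → ¬((i : ℕ) = 0 ∧ (j : ℕ) = 1) →
      ¬((i : ℕ) = 1 ∧ (j : ℕ) = 0) → B i j = 0)
    (h12 : B ⟨0, by omega⟩ ⟨1, by omega⟩ ≠ 0)
    (hid : ∀ i j k : Fin n, i ≠ j → j ≠ k → i ≠ k →
      B i i * B j k - B i j * B i k
        + (1 / ((n : ℝ) - 2)) * ∑ m, B j m * B k m = 0) :
    (∀ α : Fin n, 2 ≤ (α : ℕ) →
      B α α = -(B ⟨0, by omega⟩ ⟨0, by omega⟩ + B ⟨1, by omega⟩ ⟨1, by omega⟩)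
        / ((n : ℝ) - 2)) ∧
    Matrix.trace B = 0 := by
  have hn2 : (n : ℝ) - 2 ≠ 0 := by
    have : (4 : ℝ) ≤ n := by exact_mod_cast hn
    linarith
  have hdiag : ∀ α : Fin n, 2 ≤ (α : ℕ) →
      B α α = -(B ⟨0, by omega⟩ ⟨0, by omega⟩ + B ⟨1, by omega⟩ ⟨1, by omega⟩)
        / ((n : ℝ) - 2) := by
    intro α hα
    have hα0 : α ≠ ⟨0, by omega⟩ := fun h => by simp [h] at hα
    have hα1 : α ≠ ⟨1, by omega⟩ := fun h => by simp [h] at hα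
    have h01 : (⟨0, by omega⟩ : Fin n) ≠ ⟨1, by omega⟩ := by simp
    rw [apply_self_eq_neg_mul_of_mixed_identity hsym h01
      (fun m hm => hoff _ m (Ne.symm hm.1) (fun h => hm.2 (Fin.ext h.2)) (by simp))
      (hoff α _ hα0 (by omega) (by omega)) (hoff α _ hα1 (by omega) (by omega)) h12 _
      (hid α _ _ hα0 h01 hα1)]
    ring
  refine ⟨hdiag, ?_⟩
  obtain ⟨k, rfl⟩ : ∃ k, n = k + 2 := ⟨n - 2, by omega⟩
  rw [trace_eq_add_of_diag_eq B _ fun α => hdiag α.succ.succ (by simp)]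
  simp only [Fin.zero_eta, Fin.mk_one]
  push_cast at hn2 ⊢
  field_simp
  ring
end

section
/- Let n ≥ 5 and let λ₁,…,λ_n and λ̄₁,…,λ̄_n be real numbers satisfying, for all i ≠ j: λ_i λ_j + (1/(n−2))(λ_i² + λ_j²) = λ̄_i λ̄_j + (1/(n−2))(λ̄_i² + λ̄_j²). Suppose further that Σ_i λ_i = Σ_i λ̄_i = 0, Σ_i λ_i² = Σ_i λ̄_i² = (n−1)/n, and that no value among λ₁,…,λ_n occurs with multiplicity ≥ n−2. Then λ̄_i = λ_i for all i, or λ̄_i = −λ_i for all i. -/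
/-!
Write `Q(x, y) = xy + c(x² + y²)` with `c = 1/(n − 2)`, so that the hypothesis says
`Q(λ_i, λ_j) = Q(λ̄_i, λ̄_j)` for `i ≠ j`. Since `Q(x, y) − Q(x, z) = (y − z)(x + c(y + z))`,
comparing the identities for `(m, p)` and `(m, q)` shows that, once `λ_p ≠ λ_q`, the `λ̄_m` with
`m ∉ {p, q}` are an affine function `aλ_m + b` of the `λ_m`: otherwise `λ` would be constant
off `{p, q}`, a value of multiplicity `≥ n − 2`. Feeding this affine law back into the identities
among three indices off `{p, q}` forces `a² = 1` and `b = 0`, provided `λ` is not constant off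
`{p, q}` and one further index; such a pair `p, q` exists because `n ≥ 5`. Finally the
normalizations give `λ̄_p + λ̄_q = a(λ_p + λ_q)` and `λ̄_p λ̄_q = λ_p λ_q`, and the swapped
solution `λ̄_p = aλ_q` would again make `λ` constant off `{p, q}`.
-/

open Finset

def pairForm (c x y : ℝ) : ℝ := x * y + c * (x ^ 2 + y ^ 2)

lemma pairForm_sub_pairForm (c x y z : ℝ) :
    pairForm c x y - pairForm c x z = (y - z) * (x + c * (y + z)) := by
  unfold pairForm
  ring

lemma add_eq_add_of_sum_eq_of_eq_off_pair {ι M : Type*} [Fintype ι] [AddCommGroup M]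
    {f g : ι → M} {p q : ι} (hpq : p ≠ q) (hfg : ∑ i, f i = ∑ i, g i)
    (h : ∀ m, m ≠ p → m ≠ q → f m = g m) : f p + f q = g p + g q := by
  have key := Fintype.sum_eq_add p q hpq (f := f - g) fun m hm => sub_eq_zero.2 (h m hm.1 hm.2)
  simp only [Pi.sub_apply, Finset.sum_sub_distrib, hfg, sub_self] at key
  rw [← sub_eq_zero, add_sub_add_comm, key]

section

variable {ι : Type*} {c : ℝ} {l lb : ι → ℝ}

lemma exists_pairForm_ne (hl : ∀ p q : ι, ∀ C : ℝ, ∃ m, m ≠ p ∧ m ≠ q ∧ l m ≠ C)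
    {p q : ι} (hpq : l p ≠ l q) :
    ∃ m, m ≠ p ∧ m ≠ q ∧ pairForm c (l m) (l p) ≠ pairForm c (l m) (l q) := by
  obtain ⟨m, hmp, hmq, hm⟩ := hl p q (-c * (l p + l q))
  refine ⟨m, hmp, hmq, fun h => ?_⟩
  have key := pairForm_sub_pairForm c (l m) (l p) (l q)
  rw [h, sub_self, eq_comm, mul_eq_zero] at key
  rcases key with h | h
  · exact hpq (sub_eq_zero.1 h)
  · exact hm (by linarith)

lemma eq_of_pairForm_eq (hQ : ∀ i j, i ≠ j → pairForm c (l i) (l j) = pairForm c (lb i) (lb j))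
    (hl : ∀ p q : ι, ∀ C : ℝ, ∃ m, m ≠ p ∧ m ≠ q ∧ l m ≠ C) {i j : ι} (h : lb i = lb j) :
    l i = l j := by
  by_contra hij
  obtain ⟨m, hmi, hmj, hm⟩ := exists_pairForm_ne (c := c) hl hij
  exact hm (by rw [hQ m i hmi, hQ m j hmj, h])

lemma exists_affine_off_pair
    (hQ : ∀ i j, i ≠ j → pairForm c (l i) (l j) = pairForm c (lb i) (lb j))
    (hl : ∀ p q : ι, ∀ C : ℝ, ∃ m, m ≠ p ∧ m ≠ q ∧ l m ≠ C) {p q : ι} (hpq : l p ≠ l q) :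
    ∃ a b : ℝ, ∀ m, m ≠ p → m ≠ q → lb m = a * l m + b := by
  have hD : lb p - lb q ≠ 0 := sub_ne_zero.2 fun h => hpq (eq_of_pairForm_eq hQ hl h)
  refine ⟨(l p - l q) / (lb p - lb q),
    (l p - l q) / (lb p - lb q) * (c * (l p + l q)) - c * (lb p + lb q), fun m hmp hmq => ?_⟩
  have key := pairForm_sub_pairForm c (l m) (l p) (l q)
  rw [hQ m p hmp, hQ m q hmq, pairForm_sub_pairForm] at key
  field_simp
  linear_combination key

lemma sq_sub_one_mul_add_eq_zero_of_affine
    (hQ : ∀ i j, i ≠ j → pairForm c (l i) (l j) = pairForm c (lb i) (lb j))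
    {a b : ℝ} {u v w : ι} (hwu : w ≠ u) (hwv : w ≠ v) (huv : l u ≠ l v)
    (hu : lb u = a * l u + b) (hv : lb v = a * l v + b) (hw : lb w = a * l w + b) :
    (a ^ 2 - 1) * (l w + c * (l u + l v)) + a * b * (1 + 2 * c) = 0 := by
  have key := pairForm_sub_pairForm c (l w) (l u) (l v)
  rw [hQ w u hwu, hQ w v hwv, pairForm_sub_pairForm, hu, hv, hw] at key
  have h : (l u - l v) * ((a ^ 2 - 1) * (l w + c * (l u + l v)) + a * b * (1 + 2 * c)) = 0 := by
    linear_combination key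
  exact (mul_eq_zero.1 h).resolve_left (sub_ne_zero.2 huv)

lemma sq_eq_one_of_affine_triple
    (hQ : ∀ i j, i ≠ j → pairForm c (l i) (l j) = pairForm c (lb i) (lb j)) (hc : c ≠ 1)
    {a b : ℝ} {u v w : ι} (huv : l u ≠ l v) (huw : l u ≠ l w) (hvw : l v ≠ l w)
    (hu : lb u = a * l u + b) (hv : lb v = a * l v + b) (hw : lb w = a * l w + b) :
    a ^ 2 = 1 := by
  have hwv : w ≠ v := fun h => hvw (congrArg l h).symm
  have hwu : w ≠ u := fun h => huw (congrArg l h).symm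
  have hvu : v ≠ u := fun h => huv (congrArg l h).symm
  have Zw := sq_sub_one_mul_add_eq_zero_of_affine hQ hwu hwv huv hu hv hw
  have Zv := sq_sub_one_mul_add_eq_zero_of_affine hQ hvu hwv.symm huw hu hw hv
  have h : (a ^ 2 - 1) * ((1 - c) * (l w - l v)) = 0 := by linear_combination Zw - Zv
  have hne : (1 - c) * (l w - l v) ≠ 0 :=
    mul_ne_zero (sub_ne_zero.2 hc.symm) (sub_ne_zero.2 hvw.symm)
  linear_combination (mul_eq_zero.1 h).resolve_right hne

lemma sq_eq_one_and_eq_zero_of_affine_on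
    (hQ : ∀ i j, i ≠ j → pairForm c (l i) (l j) = pairForm c (lb i) (lb j))
    (hc₁ : c ≠ 1) (hc₂ : 1 + 2 * c ≠ 0) {R : Set ι} {a b : ℝ}
    (haff : ∀ m ∈ R, lb m = a * l m + b) (hR : ∀ x C, ∃ m ∈ R, m ≠ x ∧ l m ≠ C)
    {u : ι} (hu : u ∈ R) : a ^ 2 = 1 ∧ b = 0 := by
  obtain ⟨v, hv, hvu, hlvu⟩ := hR u (l u)
  obtain ⟨w, hw, hwu, hlwv⟩ := hR u (l v)
  have hwv : w ≠ v := fun h => hlwv (congrArg l h)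
  have Zw := sq_sub_one_mul_add_eq_zero_of_affine hQ hwu hwv hlvu.symm
    (haff u hu) (haff v hv) (haff w hw)
  -- Either three points of `R` carry distinct values, or `w, w'` are two points off `{u, v}`
  -- with different values.
  have ha : a ^ 2 = 1 := by
    by_cases hlwu : l w = l u
    · obtain ⟨w', hw', hw'v, hlw'u⟩ := hR v (l u)
      by_cases hlw'v : l w' = l v
      · have Zw' := sq_sub_one_mul_add_eq_zero_of_affine hQ (fun h => hlw'u (congrArg l h)) hw'v
          hlvu.symm (haff u hu) (haff v hv) (haff w' hw')
        have h : (a ^ 2 - 1) * (l w - l w') = 0 := by linear_combination Zw - Zw'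
        have hne : l w - l w' ≠ 0 := by rw [hlwu, hlw'v]; exact sub_ne_zero.2 hlvu.symm
        linear_combination (mul_eq_zero.1 h).resolve_right hne
      · exact sq_eq_one_of_affine_triple hQ hc₁ hlvu.symm (Ne.symm hlw'u) (Ne.symm hlw'v)
          (haff u hu) (haff v hv) (haff w' hw')
    · exact sq_eq_one_of_affine_triple hQ hc₁ hlvu.symm (Ne.symm hlwu) (Ne.symm hlwv)
        (haff u hu) (haff v hv) (haff w hw)
  refine ⟨ha, ?_⟩
  have ha₀ : a ≠ 0 := by rintro rfl; norm_num at ha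
  have h : a * b * (1 + 2 * c) = 0 := by linear_combination Zw - (l w + c * (l u + l v)) * ha
  simpa [ha₀, hc₂] using h

lemma exists_mem_ne_of_triple {R : Set ι} {u v w : ι} (hu : u ∈ R) (hv : v ∈ R) (hw : w ∈ R)
    (huv : l u ≠ l v) (huw : l u ≠ l w) (hvw : l v ≠ l w) (x : ι) (C : ℝ) :
    ∃ m ∈ R, m ≠ x ∧ l m ≠ C := by
  by_cases hux : u = x
  · subst hux
    by_cases hvC : l v = C
    · exact ⟨w, hw, fun h => huw (congrArg l h).symm, hvC ▸ hvw.symm⟩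
    · exact ⟨v, hv, fun h => huv (congrArg l h).symm, hvC⟩
  by_cases huC : l u = C
  · by_cases hvx : v = x
    · exact ⟨w, hw, fun h => hvw (congrArg l (hvx.trans h.symm)), huC ▸ huw.symm⟩
    · exact ⟨v, hv, hvx, huC ▸ huv.symm⟩
  · exact ⟨u, hu, hux, huC⟩

lemma ne_of_eq_off_triple (hl : ∀ p q : ι, ∀ C : ℝ, ∃ m, m ≠ p ∧ m ≠ q ∧ l m ≠ C)
    {p q x : ι} {C : ℝ} (hC : ∀ m, m ≠ p → m ≠ q → m ≠ x → l m = C) : l p ≠ C := by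
  intro hp
  obtain ⟨m, hmq, hmx, hm⟩ := hl q x C
  by_cases hmp : m = p
  · exact hm (hmp ▸ hp)
  · exact hm (hC m hmp hmq hmx)

lemma exists_pair_ne_forall_exists_ne [Fintype ι] (hcard : 5 ≤ Fintype.card ι)
    (hl : ∀ p q : ι, ∀ C : ℝ, ∃ m, m ≠ p ∧ m ≠ q ∧ l m ≠ C) :
    ∃ p q : ι, l p ≠ l q ∧ ∀ x C, ∃ m ∈ {m | m ≠ p ∧ m ≠ q}, m ≠ x ∧ l m ≠ C := by
  classical
  obtain ⟨q⟩ : Nonempty ι := Fintype.card_pos_iff.1 (by omega)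
  obtain ⟨p, -, -, hpq⟩ := hl q q (l q)
  by_cases hR : ∀ x C, ∃ m ∈ {m | m ≠ p ∧ m ≠ q}, m ≠ x ∧ l m ≠ C
  · exact ⟨p, q, hpq, hR⟩
  push Not at hR
  obtain ⟨x, C, hC⟩ := hR
  obtain ⟨x', hx'p, hx'q, hx'C⟩ := hl p q C
  obtain rfl : x' = x := by
    by_contra h
    exact hx'C (hC x' ⟨hx'p, hx'q⟩ h)
  have hpC : l p ≠ C := ne_of_eq_off_triple hl fun m hp hq hx => hC m ⟨hp, hq⟩ hx
  have hqC : l q ≠ C := ne_of_eq_off_triple hl fun m hq hp hx => hC m ⟨hp, hq⟩ hx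
  obtain ⟨k, hk, k', hk', hkk'⟩ := (Finset.one_lt_card (s := univ \ {p, q, x'})).1 (by
    have h₁ := Finset.le_card_sdiff {p, q, x'} univ
    have h₂ : #{p, q, x'} ≤ 3 := Finset.card_le_three
    rw [card_univ] at h₁
    omega)
  simp only [mem_sdiff, mem_univ, mem_insert, mem_singleton, true_and, not_or] at hk hk'
  have hlk : l k = C := hC k ⟨hk.1, hk.2.1⟩ hk.2.2
  have hlk' : l k' = C := hC k' ⟨hk'.1, hk'.2.1⟩ hk'.2.2
  -- Trading `p` or `q` for the point `k` of the fibre of `C` leaves three distinct values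
  -- off the new pair: `λ x'`, `C`, and one of `λ p`, `λ q`.
  by_cases hxp : l x' = l p
  · refine ⟨k, p, hlk ▸ hpC.symm, exists_mem_ne_of_triple (u := q) (v := x') (w := k')
      ⟨Ne.symm hk.2.1, fun h => hpq (congrArg l h).symm⟩ ⟨fun h => hk.2.2 h.symm, hx'p⟩
      ⟨hkk'.symm, hk'.1⟩ (hxp ▸ hpq.symm) (hlk' ▸ hqC) (hlk' ▸ hx'C)⟩
  · refine ⟨k, q, hlk ▸ hqC.symm, exists_mem_ne_of_triple (u := p) (v := x') (w := k')
      ⟨Ne.symm hk.1, fun h => hpq (congrArg l h)⟩ ⟨fun h => hk.2.2 h.symm, hx'q⟩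
      ⟨hkk'.symm, hk'.2.1⟩ (Ne.symm hxp) (hlk' ▸ hpC) (hlk' ▸ hx'C)⟩

lemma eq_or_eq_neg_of_eq_mul_off_pair [Fintype ι]
    (hQ : ∀ i j, i ≠ j → pairForm c (l i) (l j) = pairForm c (lb i) (lb j))
    (hl : ∀ p q : ι, ∀ C : ℝ, ∃ m, m ≠ p ∧ m ≠ q ∧ l m ≠ C)
    (hs : ∑ i, l i = 0) (hbs : ∑ i, lb i = 0) (hsq : ∑ i, lb i ^ 2 = ∑ i, l i ^ 2)
    {p q : ι} (hpq : l p ≠ l q) {ε : ℝ} (hε : ε ^ 2 = 1)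
    (h : ∀ m, m ≠ p → m ≠ q → lb m = ε * l m) : lb = l ∨ lb = -l := by
  have hpq' : p ≠ q := fun h => hpq (congrArg l h)
  have hsum : lb p + lb q = ε * l p + ε * l q :=
    add_eq_add_of_sum_eq_of_eq_off_pair hpq' (by rw [hbs, ← Finset.mul_sum, hs, mul_zero]) h
  have hsq₂ : lb p ^ 2 + lb q ^ 2 = l p ^ 2 + l q ^ 2 :=
    add_eq_add_of_sum_eq_of_eq_off_pair (f := fun i => lb i ^ 2) hpq' hsq
      fun m hmp hmq => by rw [h m hmp hmq, mul_pow, hε, one_mul]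
  have hprod : lb p * lb q = l p * l q := by
    have key := hQ p q hpq'
    unfold pairForm at key
    linear_combination -key - c * hsq₂
  -- `λ̄ p` and `λ̄ q` are the two roots of `X² - ε (λ p + λ q) X + λ p λ q`.
  have hroot : (lb p - ε * l p) * (lb p - ε * l q) = 0 := by
    linear_combination lb p * hsum - hprod + l p * l q * hε
  rcases mul_eq_zero.1 hroot with hp | hp
  · have hlb : ∀ i, lb i = ε * l i := by
      intro i
      by_cases hip : i = p
      · subst hip; linear_combination hp
      by_cases hiq : i = q
      · subst hiq; linear_combination hsum - hp
      exact h i hip hiq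
    rcases sq_eq_one_iff.1 hε with rfl | rfl
    · exact Or.inl (funext fun i => by simp [hlb])
    · exact Or.inr (funext fun i => by simp [hlb])
  · exfalso
    obtain ⟨m, hmp, hmq, hm⟩ := exists_pairForm_ne (c := c) hl hpq
    apply hm
    rw [hQ m p hmp, h m hmp hmq, sub_eq_zero.1 hp]
    unfold pairForm
    linear_combination (l m * l q + c * (l m ^ 2 + l q ^ 2)) * hε

theorem eq_or_eq_neg_of_pairForm_eq [Fintype ι] (hcard : 5 ≤ Fintype.card ι)
    (hc₁ : c ≠ 1) (hc₂ : 1 + 2 * c ≠ 0)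
    (hQ : ∀ i j, i ≠ j → pairForm c (l i) (l j) = pairForm c (lb i) (lb j))
    (hl : ∀ p q : ι, ∀ C : ℝ, ∃ m, m ≠ p ∧ m ≠ q ∧ l m ≠ C)
    (hs : ∑ i, l i = 0) (hbs : ∑ i, lb i = 0) (hsq : ∑ i, lb i ^ 2 = ∑ i, l i ^ 2) :
    lb = l ∨ lb = -l := by
  obtain ⟨p, q, hpq, hR⟩ := exists_pair_ne_forall_exists_ne hcard hl
  obtain ⟨a, b, haff⟩ := exists_affine_off_pair hQ hl hpq
  obtain ⟨u, hu, -⟩ := hR p 0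
  obtain ⟨ha, rfl⟩ := sq_eq_one_and_eq_zero_of_affine_on hQ hc₁ hc₂
    (fun m hm => haff m hm.1 hm.2) hR hu
  exact eq_or_eq_neg_of_eq_mul_off_pair hQ hl hs hbs hsq hpq ha
    fun m hmp hmq => by rw [haff m hmp hmq, add_zero]

end

lemma exists_ne_off_pair_of_ncard_fiber_lt {ι : Type*} [Fintype ι] {l : ι → ℝ}
    (hmult : ∀ i, {j | l j = l i}.ncard < Fintype.card ι - 2) (p q : ι) (C : ℝ) :
    ∃ m, m ≠ p ∧ m ≠ q ∧ l m ≠ C := by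
  by_contra! h
  have hsub : ({p, q}ᶜ : Set ι) ⊆ {j | l j = C} := fun m hm => by
    simp only [Set.mem_compl_iff, Set.mem_insert_iff, Set.mem_singleton_iff, not_or] at hm
    exact h m hm.1 hm.2
  have hcompl : Fintype.card ι - 2 ≤ ({p, q}ᶜ : Set ι).ncard := by
    have h₁ := Set.ncard_add_ncard_compl ({p, q} : Set ι)
    have h₂ := Set.ncard_insert_le p {q}
    rw [Set.ncard_singleton, Nat.card_eq_fintype_card] at *
    omega
  obtain ⟨m, hm⟩ : ({p, q}ᶜ : Set ι).Nonempty :=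
    Set.nonempty_of_ncard_ne_zero (by have := hmult p; omega)
  have hfiber : {j | l j = l m} = {j | l j = C} := by rw [hsub hm]
  have := hmult m
  rw [hfiber] at this
  have := Set.ncard_le_ncard hsub
  omega

/-- Proposition 7.2 (algebraic core): let `n ≥ 5` and `λ, λ̄ : Fin n → ℝ`
satisfy the Gauss-equation identities
`λ_i λ_j + (λ_i² + λ_j²)/(n−2) = λ̄_i λ̄_j + (λ̄_i² + λ̄_j²)/(n−2)` for `i ≠ j`,
the normalizations `Σ λ_i = Σ λ̄_i = 0`, `Σ λ_i² = Σ λ̄_i² = (n−1)/n`, and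
suppose no value among the `λ_i` has multiplicity `≥ n−2`.
Then `λ̄ = λ` or `λ̄ = −λ`. -/
theorem stmt4 (n : ℕ) (hn : 5 ≤ n) (l lb : Fin n → ℝ)
    (heq : ∀ i j : Fin n, i ≠ j →
      l i * l j + (1 / ((n : ℝ) - 2)) * ((l i) ^ 2 + (l j) ^ 2)
        = lb i * lb j + (1 / ((n : ℝ) - 2)) * ((lb i) ^ 2 + (lb j) ^ 2))
    (hs : ∑ i, l i = 0) (hbs : ∑ i, lb i = 0)
    (hn2 : ∑ i, (l i) ^ 2 = ((n : ℝ) - 1) / n)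
    (hbn2 : ∑ i, (lb i) ^ 2 = ((n : ℝ) - 1) / n)
    (hmult : ∀ i : Fin n, Set.ncard {j : Fin n | l j = l i} < n - 2) :
    (∀ i, lb i = l i) ∨ (∀ i, lb i = - l i) := by
  have h₅ : (5 : ℝ) ≤ n := by exact_mod_cast hn
  have hc_pos : 0 < 1 / ((n : ℝ) - 2) := by apply div_pos <;> linarith
  have hc_le : 1 / ((n : ℝ) - 2) ≤ 1 / 3 := one_div_le_one_div_of_le (by norm_num) (by linarith)
  have key := eq_or_eq_neg_of_pairForm_eq (c := 1 / ((n : ℝ) - 2)) (by simpa using hn)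
    (by linarith) (by linarith) heq
    (exists_ne_off_pair_of_ncard_fiber_lt (by simpa using hmult)) hs hbs (by rw [hn2, hbn2])
  simpa [funext_iff] using key
end

section
/- Let λ₁,…,λ_n, λ̄₁,…,λ̄_n be real numbers with n ≥ 4 such that for all distinct i, j, k: (λ_i − λ_k)[λ_j + (λ_i + λ_k)/(n−2)] = (λ̄_i − λ̄_k)[λ̄_j + (λ̄_i + λ̄_k)/(n−2)]. Suppose λ₁ ≠ λ₂. If there exist indices i, k outside {1,2,3} with λ_i ≠ λ_k, then the three points (λ₁, λ̄₁), (λ₂, λ̄₂), (λ₃, λ̄₃) in ℝ² are collinear. -/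
/-!
The identity for the triple `(i, j, k)` is affine in `(λ_j, λ̄_j)`: once `i ≠ k` are fixed,
every pair `(λ_j, λ̄_j)` with `j ∉ {i, k}` lies on the line
`(λ_i − λ_k) x − (λ̄_i − λ̄_k) y = const`, which is a genuine line as soon as `λ_i ≠ λ_k`.
Choosing `i, k` outside `{1, 2, 3}` puts the first three points on it.
-/

lemma collinear_of_forall_mul_fst_sub_mul_snd_eq {s : Set (ℝ × ℝ)} {a b d : ℝ} (ha : a ≠ 0)
    (hs : ∀ p ∈ s, a * p.1 - b * p.2 = d) : Collinear ℝ s := by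
  rw [collinear_iff_exists_forall_eq_smul_vadd]
  refine ⟨(d / a, 0), (b / a, 1), fun p hp => ⟨p.2, ?_⟩⟩
  have hp := hs p hp
  ext
  · simp only [vadd_eq_add, Prod.fst_add, Prod.smul_fst, smul_eq_mul]
    field_simp
    linarith
  · simp

lemma mul_sub_mul_eq_of_gauss_identity {ι : Type*} {l lb : ι → ℝ} {m : ℝ}
    (heq : ∀ i j k : ι, i ≠ j → j ≠ k → i ≠ k →
      (l i - l k) * (l j + (l i + l k) / m) = (lb i - lb k) * (lb j + (lb i + lb k) / m))
    {i j k : ι} (hij : i ≠ j) (hjk : j ≠ k) (hik : i ≠ k) :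
    (l i - l k) * l j - (lb i - lb k) * lb j
      = ((lb i - lb k) * (lb i + lb k) - (l i - l k) * (l i + l k)) / m := by
  linear_combination heq i j k hij hjk hik

/-- The collinearity step in the rigidity proof: if
`(λ_i − λ_k)[λ_j + (λ_i + λ_k)/(n−2)] = (λ̄_i − λ̄_k)[λ̄_j + (λ̄_i + λ̄_k)/(n−2)]`
holds for all distinct `i, j, k`, `λ₁ ≠ λ₂`, and there are indices `i, k`
outside `{1,2,3}` (0-indexed: with `i, k ≥ 3`) with `λ_i ≠ λ_k`, then the
three points `(λ₁, λ̄₁), (λ₂, λ̄₂), (λ₃, λ̄₃)` in `ℝ²` are collinear. -/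
theorem stmt5 (n : ℕ) (hn : 4 ≤ n) (l lb : Fin n → ℝ)
    (heq : ∀ i j k : Fin n, i ≠ j → j ≠ k → i ≠ k →
      (l i - l k) * (l j + (l i + l k) / ((n : ℝ) - 2))
        = (lb i - lb k) * (lb j + (lb i + lb k) / ((n : ℝ) - 2)))
    (hex : ∃ i k : Fin n, 3 ≤ (i : ℕ) ∧ 3 ≤ (k : ℕ) ∧ l i ≠ l k) :
    Collinear ℝ
      ({(l ⟨0, by omega⟩, lb ⟨0, by omega⟩),
        (l ⟨1, by omega⟩, lb ⟨1, by omega⟩),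
        (l ⟨2, by omega⟩, lb ⟨2, by omega⟩)} : Set (ℝ × ℝ)) := by
  obtain ⟨i, k, hi, hk, hlik⟩ := hex
  have hik : i ≠ k := fun h => hlik (congrArg l h)
  have hline : ∀ j : Fin n, (j : ℕ) < 3 → (l i - l k) * l j - (lb i - lb k) * lb j
      = ((lb i - lb k) * (lb i + lb k) - (l i - l k) * (l i + l k)) / ((n : ℝ) - 2) :=
    fun j hj => mul_sub_mul_eq_of_gauss_identity heq
      (fun h => by subst h; omega) (fun h => by subst h; omega) hik
  apply collinear_of_forall_mul_fst_sub_mul_snd_eq (sub_ne_zero.mpr hlik)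
  rintro p (rfl | rfl | rfl) <;> exact hline _ (by simp)
end

section
/- If u, ū : L² → ℝ³ are a Bonnet pair (isometric surfaces with the same mean curvature function at corresponding points, not congruent in ℝ³), then the cylinders f = (u, id) and f̄ = (ū, id) : L² × ℝ^{n−2} → ℝ^{n+1} (n ≥ 3) induce the same Möbius metric g = ḡ, while their principal directions do not correspond; hence f̄ is a Möbius deformation of f. -/
open Matrix

/-!
Because the cylinders have shape operator `S_u ⊕ 0`, their Möbius density
`ρ² = n/(n-1) (|S|² - n H²)` depends only on `tr S_u = 2H_u` and `det S_u = K_u`, which a Bonnet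
pair shares; so `ρ = ρ̄` and `g = ḡ`. Since `ρ > 0` and the traces agree, `B = B̄` at `p₀` would
force `S_f = S_f̄` there, hence `S_u = S_ū`.
-/

namespace Matrix

variable {R m l : Type*} [Fintype m] [Fintype l]

theorem trace_fromBlocks [AddCommMonoid R] (A : Matrix m m R) (B : Matrix m l R)
    (C : Matrix l m R) (D : Matrix l l R) : (fromBlocks A B C D).trace = A.trace + D.trace := by
  simp [trace, Fintype.sum_sum_type]

theorem trace_fromBlocks_zero [AddCommMonoid R] (A : Matrix m m R) :
    (fromBlocks A 0 0 0 : Matrix (m ⊕ l) (m ⊕ l) R).trace = A.trace := by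
  simp [trace_fromBlocks]

theorem trace_mul_transpose_fromBlocks_zero [Semiring R] (A : Matrix m m R) :
    ((fromBlocks A 0 0 0 : Matrix (m ⊕ l) (m ⊕ l) R) * (fromBlocks A 0 0 0)ᵀ).trace
      = (A * Aᵀ).trace := by
  simp [fromBlocks_transpose, fromBlocks_multiply, trace_fromBlocks]

theorem trace_mul_transpose_of_isSymm_fin_two [CommRing R] {S : Matrix (Fin 2) (Fin 2) R}
    (hS : S.IsSymm) :
    (S * Sᵀ).trace = S.trace ^ 2 - 2 * S.det := by
  have h10 : S 1 0 = S 0 1 := by simpa using hS.apply 0 1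
  simp only [trace_fin_two, det_fin_two, mul_apply, Fin.sum_univ_two, transpose_apply, h10]
  ring

end Matrix

/-- The squared Möbius density `n/(n-1) (|S|² - n H²)` of a hypersurface in `ℝ^{n+1}` with shape
operator `S` and mean curvature `H = tr S / n`. -/
noncomputable def mobiusDensitySq {ι : Type*} [Fintype ι] (n : ℕ) (S : Matrix ι ι ℝ) : ℝ :=
  ((n : ℝ) / ((n : ℝ) - 1)) * ((S * Sᵀ).trace - n * (S.trace / n) ^ 2)

theorem mobiusDensitySq_fromBlocks_zero {m l : Type*} [Fintype m] [Fintype l] (n : ℕ)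
    (S : Matrix m m ℝ) :
    mobiusDensitySq n (fromBlocks S 0 0 0 : Matrix (m ⊕ l) (m ⊕ l) ℝ) = mobiusDensitySq n S := by
  simp only [mobiusDensitySq, trace_fromBlocks_zero, trace_mul_transpose_fromBlocks_zero]

theorem mobiusDensitySq_of_isSymm_fin_two {n : ℕ} (hn : 2 ≤ n) {S : Matrix (Fin 2) (Fin 2) ℝ}
    (hS : S.IsSymm) :
    mobiusDensitySq n S = S.trace ^ 2 - 2 * n / (n - 1) * S.det := by
  have hn' : (2 : ℝ) ≤ n := by exact_mod_cast hn
  have hn0 : (n : ℝ) ≠ 0 := by linarith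
  have hn1 : (n : ℝ) - 1 ≠ 0 := by linarith
  rw [mobiusDensitySq, trace_mul_transpose_of_isSymm_fin_two hS]
  field_simp
  ring

theorem stmt11_general (n : ℕ) (hn : 3 ≤ n) (L : Type*)
    (Hu Ku : L → ℝ)
    (Su Sbu : L → Matrix (Fin 2) (Fin 2) ℝ)
    (hSsym : ∀ p, (Su p).IsSymm) (hSbsym : ∀ p, (Sbu p).IsSymm)
    (htr : ∀ p, (Su p).trace = 2 * Hu p) (hbtr : ∀ p, (Sbu p).trace = 2 * Hu p)
    (hdet : ∀ p, (Su p).det = Ku p) (hbdet : ∀ p, (Sbu p).det = Ku p)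
    (p₀ : L) (hne : Su p₀ ≠ Sbu p₀)
    -- umbilic-free condition: ρ² = 4H_u² − (2n/(n−1))K_u > 0
    (hpos : ∀ p, 0 < 4 * (Hu p) ^ 2 - (2 * (n : ℝ) / ((n : ℝ) - 1)) * Ku p)
    (If Sf Sbf : L → Matrix (Fin 2 ⊕ Fin (n - 2)) (Fin 2 ⊕ Fin (n - 2)) ℝ)
    (hSf : ∀ p, Sf p = Matrix.fromBlocks (Su p) 0 0 0)
    (hSbf : ∀ p, Sbf p = Matrix.fromBlocks (Sbu p) 0 0 0)
    (ρ ρb : L → ℝ)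
    (hρ : ∀ p, ρ p = Real.sqrt (((n : ℝ) / ((n : ℝ) - 1)) *
      ((Sf p * (Sf p)ᵀ).trace - n * ((Sf p).trace / n) ^ 2)))
    (hρb : ∀ p, ρb p = Real.sqrt (((n : ℝ) / ((n : ℝ) - 1)) *
      ((Sbf p * (Sbf p)ᵀ).trace - n * ((Sbf p).trace / n) ^ 2)))
    (g gb : L → Matrix (Fin 2 ⊕ Fin (n - 2)) (Fin 2 ⊕ Fin (n - 2)) ℝ)
    (hg : ∀ p, g p = (ρ p) ^ 2 • If p)
    (hgb : ∀ p, gb p = (ρb p) ^ 2 • If p)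
    (B Bb : L → Matrix (Fin 2 ⊕ Fin (n - 2)) (Fin 2 ⊕ Fin (n - 2)) ℝ)
    (hB : ∀ p, B p = (ρ p)⁻¹ • (Sf p - ((Sf p).trace / n) • 1))
    (hBb : ∀ p, Bb p = (ρb p)⁻¹ • (Sbf p - ((Sbf p).trace / n) • 1)) :
    (∀ p, g p = gb p) ∧ B p₀ ≠ Bb p₀ := by
  have hn2 : 2 ≤ n := by omega
  have hcylinder : ∀ p (S : Matrix (Fin 2) (Fin 2) ℝ), S.IsSymm → S.trace = 2 * Hu p →
      S.det = Ku p → mobiusDensitySq n (fromBlocks S 0 0 0 : Matrix (Fin 2 ⊕ Fin (n - 2)) _ ℝ)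
        = 4 * Hu p ^ 2 - 2 * n / (n - 1) * Ku p := by
    intro p S hS hStr hSdet
    rw [mobiusDensitySq_fromBlocks_zero, mobiusDensitySq_of_isSymm_fin_two hn2 hS, hStr, hSdet]
    ring
  have hρ_same : ∀ p, ρ p = ρb p := fun p =>
    calc ρ p = √(mobiusDensitySq n (Sf p)) := hρ p
      _ = √(mobiusDensitySq n (Sbf p)) := by
        rw [hSf p, hSbf p, hcylinder p _ (hSsym p) (htr p) (hdet p),
          hcylinder p _ (hSbsym p) (hbtr p) (hbdet p)]
      _ = ρb p := (hρb p).symm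
  have hρ_ne : ρ p₀ ≠ 0 := by
    rw [hρ p₀, ← mobiusDensitySq, hSf p₀, hcylinder p₀ _ (hSsym p₀) (htr p₀) (hdet p₀)]
    exact (Real.sqrt_pos.2 (hpos p₀)).ne'
  refine ⟨fun p => by rw [hg p, hgb p, hρ_same p], fun hBB => hne ?_⟩
  rw [hB p₀, hBb p₀, ← hρ_same p₀, hSf p₀, hSbf p₀, trace_fromBlocks_zero,
    trace_fromBlocks_zero, htr p₀, ← hbtr p₀] at hBB
  have hfrom := sub_left_injective (smul_right_injective _ (inv_ne_zero hρ_ne) hBB)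
  exact (fromBlocks_inj.1 hfrom).1

/-- Proposition 3.1: let `u, ū : L² → ℝ³` be a Bonnet pair: isometric surfaces
(same first fundamental form `I_u`, hence same Gauss curvature `K_u`) with the
same mean curvature `H_u` at corresponding points, but non-congruent (their
shape operators `Su`, `S̄u` differ at some point `p₀`).  Then the cylinders
`f = (u, id)` and `f̄ = (ū, id) : L² × ℝ^{n−2} → ℝ^{n+1}` induce the same
Möbius metric `g = ḡ`, while their Möbius second fundamental forms
`B = ρ⁻¹(S_f − H_f·Id)` differ at `p₀` (the principal directions do not
correspond); hence `f̄` is a Möbius deformation of `f`. -/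
theorem stmt11 (n : ℕ) (hn : 3 ≤ n) (L : Type*)
    (Iu : L → Matrix (Fin 2) (Fin 2) ℝ)
    (Hu Ku : L → ℝ)
    (Su Sbu : L → Matrix (Fin 2) (Fin 2) ℝ)
    (hSsym : ∀ p, (Su p).IsSymm) (hSbsym : ∀ p, (Sbu p).IsSymm)
    (htr : ∀ p, (Su p).trace = 2 * Hu p) (hbtr : ∀ p, (Sbu p).trace = 2 * Hu p)
    (hdet : ∀ p, (Su p).det = Ku p) (hbdet : ∀ p, (Sbu p).det = Ku p)
    (p₀ : L) (hne : Su p₀ ≠ Sbu p₀)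
    -- umbilic-free condition: ρ² = 4H_u² − (2n/(n−1))K_u > 0
    (hpos : ∀ p, 0 < 4 * (Hu p) ^ 2 - (2 * (n : ℝ) / ((n : ℝ) - 1)) * Ku p)
    (If Sf Sbf : L → Matrix (Fin 2 ⊕ Fin (n - 2)) (Fin 2 ⊕ Fin (n - 2)) ℝ)
    (hIf : ∀ p, If p = Matrix.fromBlocks (Iu p) 0 0 1)
    (hSf : ∀ p, Sf p = Matrix.fromBlocks (Su p) 0 0 0)
    (hSbf : ∀ p, Sbf p = Matrix.fromBlocks (Sbu p) 0 0 0)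
    (ρ ρb : L → ℝ)
    (hρ : ∀ p, ρ p = Real.sqrt (((n : ℝ) / ((n : ℝ) - 1)) *
      ((Sf p * (Sf p)ᵀ).trace - n * ((Sf p).trace / n) ^ 2)))
    (hρb : ∀ p, ρb p = Real.sqrt (((n : ℝ) / ((n : ℝ) - 1)) *
      ((Sbf p * (Sbf p)ᵀ).trace - n * ((Sbf p).trace / n) ^ 2)))
    (g gb : L → Matrix (Fin 2 ⊕ Fin (n - 2)) (Fin 2 ⊕ Fin (n - 2)) ℝ)
    (hg : ∀ p, g p = (ρ p) ^ 2 • If p)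
    (hgb : ∀ p, gb p = (ρb p) ^ 2 • If p)
    (B Bb : L → Matrix (Fin 2 ⊕ Fin (n - 2)) (Fin 2 ⊕ Fin (n - 2)) ℝ)
    (hB : ∀ p, B p = (ρ p)⁻¹ • (Sf p - ((Sf p).trace / n) • 1))
    (hBb : ∀ p, Bb p = (ρb p)⁻¹ • (Sbf p - ((Sbf p).trace / n) • 1)) :
    (∀ p, g p = gb p) ∧ B p₀ ≠ Bb p₀ :=
  stmt11_general n hn L Hu Ku Su Sbu hSsym hSbsym htr hbtr hdet hbdet p₀ hne hpos If Sf Sbf hSf hSbf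
    ρ ρb hρ hρb g gb hg hgb B Bb hB hBb
end

section
/- For the cylinder f = (γ, id) : I × ℝ^{n−1} → ℝ^{n+1} over an arc-length-parameterized plane curve γ with nonvanishing geodesic curvature κ(s), the Möbius metric is g = κ(s)²(ds² + I_{ℝ^{n−1}}), the Möbius second fundamental form is diag((n−1)/n, −1/n, …, −1/n) in the principal orthonormal frame, the Möbius form has components C₁ = −κ_s/κ², C₂ = ⋯ = C_n = 0, and the Blaschke tensor is diag(a₁, a₂, …, a₂) with a₁ = −κ_ss/κ³ + (3/2)κ_s²/κ⁴ + (2n−1)/(2n²) and a₂ = −(1/2)(κ_s²/κ⁴ + 1/n²). -/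
open Matrix BigOperators

/-- Example 4.1: Möbius invariants of the cylinder `f = (γ, id) : I × ℝ^{n−1} → ℝ^{n+1}`
over an arc-length parameterized plane curve `γ` with geodesic curvature
`κ(s) > 0`.  In the orthonormal principal frame the Euclidean data are
`h = diag(κ,0,…,0)`, `H = κ/n`, `ρ = κ`, and the Möbius invariants are
computed by the formulas
`B_ij = ρ⁻¹(h_ij − Hδ_ij)`,
`C_i = −ρ⁻²[e_i(H) + Σ_j (h_ij − Hδ_ij) e_j(log ρ)]`,
`A_ij = −ρ⁻²[Hess_ij(log ρ) − e_i(log ρ)e_j(log ρ) − H h_ij]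
        − ½ρ⁻²(|∇log ρ|² + H²)δ_ij`,
where only `e₁ = ∂/∂s` differentiates (functions depend on `s` alone).
Conclusion: `g = κ²(ds² + I_{ℝ^{n−1}})`, `B = diag((n−1)/n, −1/n, …, −1/n)`,
`C₁ = −κ_s/κ²`, `C₂ = ⋯ = C_n = 0`, `A = diag(a₁, a₂, …, a₂)` with
`a₁ = −κ_ss/κ³ + (3/2)κ_s²/κ⁴ + (2n−1)/(2n²)`,
`a₂ = −(1/2)(κ_s²/κ⁴ + 1/n²)`. -/
theorem stmt14 (n : ℕ) (hn : 3 ≤ n)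
    (κ : ℝ → ℝ) (hκ : ContDiff ℝ (⊤ : ℕ∞) κ) (hκpos : ∀ s, 0 < κ s)
    (H : ℝ → ℝ) (hH : ∀ s, H s = κ s / n)
    (h : ℝ → Matrix (Fin n) (Fin n) ℝ)
    (hh : ∀ s, h s = Matrix.diagonal (fun i : Fin n => if (i : ℕ) = 0 then κ s else 0))
    (logρ : ℝ → ℝ) (hlogρ : ∀ s, logρ s = Real.log (κ s))
    (ρsq : ℝ → ℝ)
    (hρsq : ∀ s, ρsq s = ((n : ℝ) / ((n : ℝ) - 1)) *
      ((∑ i, ∑ j, (h s i j) ^ 2) - n * (H s) ^ 2))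
    (g : ℝ → Matrix (Fin n) (Fin n) ℝ)
    (hg : ∀ s, g s = ρsq s • (1 : Matrix (Fin n) (Fin n) ℝ))
    (B : ℝ → Matrix (Fin n) (Fin n) ℝ)
    (hB : ∀ s i j, B s i j =
      (κ s)⁻¹ * (h s i j - H s * (if i = j then 1 else 0)))
    (C : ℝ → Fin n → ℝ)
    (hC : ∀ s i, C s i = -((κ s) ^ 2)⁻¹ *
      ((if (i : ℕ) = 0 then deriv H s else 0) +
        ∑ j, (h s i j - H s * (if i = j then 1 else 0)) *
          (if (j : ℕ) = 0 then deriv logρ s else 0)))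
    (A : ℝ → Matrix (Fin n) (Fin n) ℝ)
    (hA : ∀ s i j, A s i j = -((κ s) ^ 2)⁻¹ *
      ((if (i : ℕ) = 0 ∧ (j : ℕ) = 0 then deriv (deriv logρ) s else 0)
        - (if (i : ℕ) = 0 then deriv logρ s else 0) *
            (if (j : ℕ) = 0 then deriv logρ s else 0)
        - H s * h s i j)
      - (1 / 2) * ((κ s) ^ 2)⁻¹ * ((deriv logρ s) ^ 2 + (H s) ^ 2) *
          (if i = j then 1 else 0)) :
    (∀ s, g s = (κ s) ^ 2 • (1 : Matrix (Fin n) (Fin n) ℝ)) ∧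
    (∀ s, B s = Matrix.diagonal
      (fun i : Fin n => if (i : ℕ) = 0 then ((n : ℝ) - 1) / n else -1 / n)) ∧
    (∀ s, ∀ i : Fin n,
      C s i = if (i : ℕ) = 0 then -(deriv κ s) / (κ s) ^ 2 else 0) ∧
    (∀ s, A s = Matrix.diagonal (fun i : Fin n => if (i : ℕ) = 0
      then -(deriv (deriv κ) s) / (κ s) ^ 3
        + (3 / 2) * (deriv κ s) ^ 2 / (κ s) ^ 4
        + (2 * (n : ℝ) - 1) / (2 * (n : ℝ) ^ 2)
      else -(1 / 2) * ((deriv κ s) ^ 2 / (κ s) ^ 4 + 1 / (n : ℝ) ^ 2))) := by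

  haveI : NeZero n := ⟨by omega⟩
  have hn0 : (n : ℝ) ≠ 0 := by
    have : (3:ℝ) ≤ n := by exact_mod_cast hn
    linarith
  have hn1 : (n : ℝ) - 1 ≠ 0 := by
    have : (3:ℝ) ≤ n := by exact_mod_cast hn
    linarith
  have hκne : ∀ s, κ s ≠ 0 := fun s => (hκpos s).ne'
  have hκdiff : Differentiable ℝ κ := hκ.differentiable (by simp)
  have hκ'diff : Differentiable ℝ (deriv κ) :=
    (contDiff_infty_iff_deriv.mp (hκ.of_le (by simp))).2.differentiable (by simp)
  have hdlog : ∀ s, deriv logρ s = deriv κ s / κ s := by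
    intro s
    have hfun : logρ = fun t => Real.log (κ t) := funext hlogρ
    rw [hfun, deriv.log (hκdiff s) (hκne s)]
  have hddlog : ∀ s, deriv (deriv logρ) s
      = (deriv (deriv κ) s * κ s - deriv κ s * deriv κ s) / (κ s) ^ 2 := by
    intro s
    have hfun : deriv logρ = fun t => deriv κ t / κ t := funext hdlog
    rw [hfun, deriv_fun_div (hκ'diff s) (hκdiff s) (hκne s)]
  have hdH : ∀ s, deriv H s = deriv κ s / n := by
    intro s
    have hfun : H = fun t => κ t / n := funext hH
    rw [hfun, deriv_div_const]
  have hval0 : ∀ i : Fin n, (i : ℕ) = 0 ↔ i = 0 := by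
    intro i; exact ⟨fun h => Fin.ext (by simpa using h), fun h => by simp [h]⟩
  have hρsqval : ∀ s, ρsq s = (κ s) ^ 2 := by
    intro s
    rw [hρsq s]
    have hsum : (∑ i, ∑ j, (h s i j) ^ 2) = (κ s) ^ 2 := by
      have : ∀ i : Fin n, (∑ j, (h s i j) ^ 2)
          = if (i : ℕ) = 0 then (κ s) ^ 2 else 0 := by
        intro i
        rw [hh s]
        simp only [Matrix.diagonal_apply]
        rw [Finset.sum_eq_single i]
        · simp
        · intro b _ hb; simp [Ne.symm hb]
        · simp
      rw [Finset.sum_congr rfl (fun i _ => this i)]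
      simp only [hval0]
      rw [Finset.sum_ite_eq' Finset.univ (0 : Fin n)]
      simp
    rw [hsum, hH s]
    field_simp
  refine ⟨fun s => by rw [hg s, hρsqval s], ?_, ?_, ?_⟩
  · intro s
    have hk : κ s ≠ 0 := hκne s
    ext i j
    rw [hB s i j, hh s, hH s, Matrix.diagonal_apply, Matrix.diagonal_apply]
    by_cases hij : i = j
    · subst hij
      by_cases h0 : (i : ℕ) = 0 <;> simp [h0] <;> field_simp <;> ring
    · simp [hij, Matrix.diagonal_apply]
  · intro s i
    have hk : κ s ≠ 0 := hκne s
    rw [hC s i]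
    have hsum : (∑ j, (h s i j - H s * (if i = j then 1 else 0)) *
          (if (j : ℕ) = 0 then deriv logρ s else 0))
        = (h s i 0 - H s * (if i = 0 then 1 else 0)) * deriv logρ s := by
      simp only [hval0]
      rw [Finset.sum_eq_single (0 : Fin n)]
      · simp
      · intro b _ hb; simp [hb]
      · simp
    rw [hsum, hh s, hH s, hdlog s, hdH s]
    by_cases h0 : (i : ℕ) = 0
    · have : i = 0 := (hval0 i).mp h0
      subst this
      simp only [Matrix.diagonal_apply, if_pos rfl, h0, if_true]
      field_simp
      ring
    · have : i ≠ 0 := fun hh' => h0 (by simp [hh'])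
      simp [Matrix.diagonal_apply, this, h0]
  · intro s
    have hk : κ s ≠ 0 := hκne s
    ext i j
    rw [hA s i j, hh s, hH s, hdlog s, hddlog s, Matrix.diagonal_apply,
      Matrix.diagonal_apply]
    by_cases hij : i = j
    · subst hij
      by_cases h0 : (i : ℕ) = 0
      · simp only [h0, if_pos rfl, and_self, if_true]
        field_simp
        ring
      · simp only [h0, if_neg h0, and_self, if_false, if_pos rfl, if_true]
        field_simp
        ring
    · have hne : ¬((i : ℕ) = 0 ∧ (j : ℕ) = 0) := by
        rintro ⟨h1, h2⟩
        exact hij (Fin.ext (by rw [h1, h2]))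
      have hprod : (if (i : ℕ) = 0 then deriv κ s / κ s else 0) *
          (if (j : ℕ) = 0 then deriv κ s / κ s else 0) = 0 := by
        by_cases hi0 : (i : ℕ) = 0
        · have hj0 : ¬(j : ℕ) = 0 := fun hj =>
            hij (Fin.ext (by rw [hi0, hj]))
          rw [if_neg hj0, mul_zero]
        · rw [if_neg hi0, zero_mul]
      rw [if_neg hne, if_neg hij, if_neg hij, if_neg hij, hprod]
      ring
end

section
/- Let n ≥ 4 and suppose λ₁, λ₂, μ, λ̄₁, λ̄₂, b ∈ ℝ satisfy λ₁ ≠ μ, λ₂ ≠ μ, λ₁ ≠ λ₂, λ₁ ≠ λ̄₁, λ₁ + λ₂ + (n−2)μ = λ̄₁ + λ̄₂ + (n−2)μ = 0, λ₁² + λ₂² = λ̄₁² + λ̄₂² + 2b², and suppose real numbers x, y (playing the roles of B_{12,α} and C_α) satisfy (λ₁−λ₂)·μ·b·x = ((n−1)/n)(λ̄₁ − λ₁)·y and (λ₁ − λ̄₁)(λ₁−λ₂)·μ·x = ((n−1)/n)·b·y. Then y = 0, and moreover μ·x = 0. -/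
/-!
With `m = (λ₁ − λ₂) μ x`, `d = λ₁ − λ̄₁` and `c = (n − 1)/n`, the two relations form the
linear system `b m + c d y = 0`, `d m − c b y = 0` in `(m, y)`, whose determinant
`−c (b² + d²)` is nonzero because `c ≠ 0` and `d ≠ 0`.
-/

theorem eq_zero_and_eq_zero_of_mul_eq_of_mul_eq {K : Type*} [Field K] [LinearOrder K]
    [IsStrictOrderedRing K] {b c d m y : K} (hc : c ≠ 0) (hd : d ≠ 0)
    (e1 : m * b = c * -d * y) (e2 : d * m = c * b * y) : y = 0 ∧ m = 0 := by
  have hdet : c * y * (b ^ 2 + d ^ 2) = 0 := by linear_combination d * e1 - b * e2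
  have hy : y = 0 := by
    have hbd : b ^ 2 + d ^ 2 ≠ 0 := by positivity
    simpa [hc, hbd] using hdet
  refine ⟨hy, ?_⟩
  simpa [hy, hd] using e2

theorem stmt17_general (n : ℕ) (hn : 4 ≤ n)
    (l₁ l₂ μ lb₁ b x y : ℝ)
    (h3 : l₁ ≠ l₂) (h4 : l₁ ≠ lb₁)
    (e1 : (l₁ - l₂) * μ * b * x = (((n : ℝ) - 1) / n) * (lb₁ - l₁) * y)
    (e2 : (l₁ - lb₁) * (l₁ - l₂) * μ * x = (((n : ℝ) - 1) / n) * b * y) :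
    y = 0 ∧ μ * x = 0 := by
  have hc : ((n : ℝ) - 1) / n ≠ 0 := by
    have : (4 : ℝ) ≤ n := by exact_mod_cast hn
    exact div_ne_zero (by linarith) (by linarith)
  obtain ⟨hy, hm⟩ := eq_zero_and_eq_zero_of_mul_eq_of_mul_eq (b := b) (d := l₁ - lb₁)
    (m := (l₁ - l₂) * (μ * x)) (y := y) hc (sub_ne_zero.mpr h4)
    (by linear_combination e1) (by linear_combination e2)
  exact ⟨hy, (mul_eq_zero.mp hm).resolve_left (sub_ne_zero.mpr h3)⟩

/-- The algebraic core of the multiplicity-`(n−2)` analysis (equations (6.7),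
(6.8) of the paper): with `λ₁, λ₂, μ, …, μ` the Möbius principal curvatures of
`f` and `(λ̄₁, b; b, λ̄₂), μ, …, μ` those of a deformation `f̄`, the quantities
`x = B_{12,α}` and `y = C_α` satisfy
`(λ₁−λ₂)·μ·b·x = ((n−1)/n)(λ̄₁−λ₁)·y` and
`(λ₁−λ̄₁)(λ₁−λ₂)·μ·x = ((n−1)/n)·b·y`; together with `λ₁ ≠ λ̄₁` these force
`y = 0` and `μ·x = 0`. -/
theorem stmt17 (n : ℕ) (hn : 4 ≤ n)
    (l₁ l₂ μ lb₁ lb₂ b x y : ℝ)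
    (h1 : l₁ ≠ μ) (h2 : l₂ ≠ μ) (h3 : l₁ ≠ l₂) (h4 : l₁ ≠ lb₁)
    (hs1 : l₁ + l₂ + ((n : ℝ) - 2) * μ = 0)
    (hs2 : lb₁ + lb₂ + ((n : ℝ) - 2) * μ = 0)
    (hnorm : l₁ ^ 2 + l₂ ^ 2 = lb₁ ^ 2 + lb₂ ^ 2 + 2 * b ^ 2)
    (e1 : (l₁ - l₂) * μ * b * x = (((n : ℝ) - 1) / n) * (lb₁ - l₁) * y)
    (e2 : (l₁ - lb₁) * (l₁ - l₂) * μ * x = (((n : ℝ) - 1) / n) * b * y) :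
    y = 0 ∧ μ * x = 0 :=
  stmt17_general n hn l₁ l₂ μ lb₁ b x y h3 h4 e1 e2
end
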